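/- arXiv:1608.08287 — 13 statements merged into one kernel-verified Lean document; each statement's English description precedes it below -/
import Mathlib

section
/- Let {,} be an H0-Poisson structure on A. Then {,} descends to the quotient vector space A/[A,A]: {a,b} = 0 whenever a ∈ [A,A], and {a,b} ∈ [A,A] whenever b ∈ [A,A]; consequently there is a unique ℂ-bilinear bracket ⌊·,·⌋ on A/[A,A] with ⌊a + [A,A], b + [A,A]⌋ = {a,b} + [A,A], and this bracket makes A/[A,A] into a Lie algebra over ℂ (it is skew-symmetric and satisfies the Jacobi identity). -/
/-!
Cyclicity `{ab, c} = {ba, c}` says that `{·, c}` vanishes on commutators, and the Leibniz rule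
says that each `{a, ·}` is a derivation, which maps commutators to sums of commutators:
`D(xy - yx) = [x, Dy] + [Dx, y]`. Hence the bracket descends to `A/[A,A]`, where the
`H₀`-skew-symmetry and the Jacobi identity of `{,}` become those of a Lie bracket.
-/

section CommutatorSpan

variable {R A : Type*} [Semiring R] [Ring A] [Module R A]

variable (R A) in
abbrev commutatorSpan : Submodule R A :=
  Submodule.span R {z : A | ∃ x y : A, z = x * y - y * x}

theorem commutatorSpan_le_ker {M : Type*} [AddCommGroup M] [Module R M] (f : A →ₗ[R] M)
    (hf : ∀ a b : A, f (a * b) = f (b * a)) : commutatorSpan R A ≤ LinearMap.ker f := by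
  rw [Submodule.span_le]
  rintro _ ⟨x, y, rfl⟩
  simp [hf x y]

theorem map_mem_commutatorSpan_of_leibniz (D : A →ₗ[R] A)
    (hD : ∀ b c : A, D (b * c) = b * D c + D b * c) {a : A} (ha : a ∈ commutatorSpan R A) :
    D a ∈ commutatorSpan R A := by
  suffices commutatorSpan R A ≤ (commutatorSpan R A).comap D from this ha
  rw [Submodule.span_le]
  rintro _ ⟨x, y, rfl⟩
  have h : D (x * y - y * x) = (x * D y - D y * x) + (D x * y - y * D x) := by
    rw [map_sub, hD, hD]; abel
  rw [SetLike.mem_coe, Submodule.mem_comap, h]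
  exact add_mem (Submodule.subset_span ⟨_, _, rfl⟩) (Submodule.subset_span ⟨_, _, rfl⟩)

end CommutatorSpan

/-- An `H₀`-Poisson structure on `A` descends to the quotient
`A/[A,A]` and induces a Lie algebra structure there. -/
theorem stmt1 {A : Type*} [Ring A] [Algebra ℂ A]
    (P : A →ₗ[ℂ] A →ₗ[ℂ] A)
    (hDer : ∀ a b c : A, P a (b * c) = b * P a c + P a b * c)
    (hCyc : ∀ a b c : A, P (a * b) c = P (b * a) c)
    (hJac : ∀ a b c : A, P a (P b c) - P b (P a c) = P (P a b) c)
    (hSkew : ∀ a b : A, P a b + P b a ∈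
      Submodule.span ℂ {z : A | ∃ x y : A, z = x * y - y * x}) :
    letI K : Submodule ℂ A := Submodule.span ℂ {z : A | ∃ x y : A, z = x * y - y * x}
    (∀ a ∈ K, ∀ b : A, P a b = 0) ∧
    (∀ a : A, ∀ b ∈ K, P a b ∈ K) ∧
    (∃! L : (A ⧸ K) →ₗ[ℂ] (A ⧸ K) →ₗ[ℂ] (A ⧸ K),
      ∀ a b : A, L (Submodule.Quotient.mk a) (Submodule.Quotient.mk b) =
        Submodule.Quotient.mk (P a b)) ∧
    (∀ L : (A ⧸ K) →ₗ[ℂ] (A ⧸ K) →ₗ[ℂ] (A ⧸ K),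
      (∀ a b : A, L (Submodule.Quotient.mk a) (Submodule.Quotient.mk b) =
        Submodule.Quotient.mk (P a b)) →
      (∀ x y : A ⧸ K, L x y = - L y x) ∧
      (∀ x y z : A ⧸ K, L x (L y z) - L y (L x z) = L (L x y) z)) := by
  change let K := commutatorSpan ℂ A; _
  intro K
  have hzero : ∀ a ∈ K, ∀ b : A, P a b = 0 := fun a ha b => by
    rw [commutatorSpan_le_ker P (fun x y => LinearMap.ext (hCyc x y)) ha, LinearMap.zero_apply]
  have hmem : ∀ a : A, ∀ b ∈ K, P a b ∈ K := fun a _ hb =>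
    map_mem_commutatorSpan_of_leibniz (P a) (hDer a) hb
  let L₀ := (P.compr₂ K.mkQ).liftQ₂ K K
    (fun a ha => LinearMap.ext fun b => by simp [hzero a ha b])
    (fun b hb => LinearMap.ext fun a => by simpa using hmem a b hb)
  refine ⟨hzero, hmem, ⟨L₀, fun a b => rfl, fun L hL => ?_⟩, fun L hL => ⟨?_, ?_⟩⟩
  · ext a b
    exact hL a b
  · simp only [Submodule.Quotient.forall, hL, eq_neg_iff_add_eq_zero, ← Submodule.Quotient.mk_add,
      Submodule.Quotient.mk_eq_zero]
    exact hSkew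
  · simp only [Submodule.Quotient.forall, hL, ← Submodule.Quotient.mk_sub, hJac, implies_true]
end

section
/- For all x,y,z ∈ A and all indices i,j,k,m ∈ {1,…,N}: Φ_{kj,im}(x, yz) = Σ_{l=1}^{N} φ(y)_{kl}·Φ_{lj,im}(x,z) + Σ_{l=1}^{N} Φ_{kj,il}(x,y)·φ(z)_{lm}, and Φ_{kj,im}(xy, z) = Σ_{l=1}^{N} φ(x)_{il}·Φ_{kj,lm}(y,z) + Σ_{l=1}^{N} φ(y)_{lj}·Φ_{kl,im}(x,z). In particular, the assignment (φ(x)_{ij}, φ(y)_{kl}) ↦ Φ_{kj,il}(x,y) is compatible with the Leibniz rules in both arguments. -/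
open TensorProduct

/-! Multiplying a tensor by `b ⊗ 1` or `1 ⊗ c` on either side acts on the matrix entries
`Φ_{kj,il}` as multiplication by the matrix `φ b` or `φ c` in the corresponding index pair.
Since both sides of each such identity are linear in the tensor, it suffices to check it on
pure tensors, where it is the entrywise formula for a matrix product. The two Leibniz rules
of the double bracket then become the stated identities after applying `Φ_{kj,im}`. -/

section EntryPairing

variable {R A A' B n : Type*} [CommRing R] [Ring A] [Ring A'] [Algebra R A] [Algebra R A']
  [CommRing B] [Algebra R B] [Fintype n] [DecidableEq n]

theorem entryPairing_tmul_one_mul (φ : A →ₐ[R] Matrix n n B) (ψ : A' →ₐ[R] Matrix n n B)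
    (Φ : n → n → n → n → (A ⊗[R] A' →ₗ[R] B))
    (hΦ : ∀ k j i l s t, Φ k j i l (s ⊗ₜ[R] t) = φ s k j * ψ t i l)
    (b : A) (w : A ⊗[R] A') (i j k m : n) :
    Φ k j i m ((b ⊗ₜ[R] (1 : A')) * w) = ∑ l, φ b k l * Φ l j i m w := by
  induction w using TensorProduct.induction_on with
  | zero => simp
  | tmul s t =>
    simp only [Algebra.TensorProduct.tmul_mul_tmul, one_mul, hΦ, map_mul, Matrix.mul_apply,
      Finset.sum_mul, mul_assoc]
  | add u v hu hv => simp only [mul_add, map_add, hu, hv, Finset.sum_add_distrib]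

theorem entryPairing_mul_one_tmul (φ : A →ₐ[R] Matrix n n B) (ψ : A' →ₐ[R] Matrix n n B)
    (Φ : n → n → n → n → (A ⊗[R] A' →ₗ[R] B))
    (hΦ : ∀ k j i l s t, Φ k j i l (s ⊗ₜ[R] t) = φ s k j * ψ t i l)
    (c : A') (w : A ⊗[R] A') (i j k m : n) :
    Φ k j i m (w * ((1 : A) ⊗ₜ[R] c)) = ∑ l, Φ k j i l w * ψ c l m := by
  induction w using TensorProduct.induction_on with
  | zero => simp
  | tmul s t =>
    simp only [Algebra.TensorProduct.tmul_mul_tmul, mul_one, hΦ, map_mul, Matrix.mul_apply,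
      Finset.mul_sum, mul_assoc]
  | add u v hu hv => simp only [add_mul, map_add, hu, hv, Finset.sum_add_distrib]

theorem entryPairing_one_tmul_mul (φ : A →ₐ[R] Matrix n n B) (ψ : A' →ₐ[R] Matrix n n B)
    (Φ : n → n → n → n → (A ⊗[R] A' →ₗ[R] B))
    (hΦ : ∀ k j i l s t, Φ k j i l (s ⊗ₜ[R] t) = φ s k j * ψ t i l)
    (a : A') (w : A ⊗[R] A') (i j k m : n) :
    Φ k j i m (((1 : A) ⊗ₜ[R] a) * w) = ∑ l, ψ a i l * Φ k j l m w := by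
  induction w using TensorProduct.induction_on with
  | zero => simp
  | tmul s t =>
    simp only [Algebra.TensorProduct.tmul_mul_tmul, one_mul, hΦ, map_mul, Matrix.mul_apply,
      Finset.mul_sum]
    exact Finset.sum_congr rfl fun l _ => by ring
  | add u v hu hv => simp only [mul_add, map_add, hu, hv, Finset.sum_add_distrib]

theorem entryPairing_mul_tmul_one (φ : A →ₐ[R] Matrix n n B) (ψ : A' →ₐ[R] Matrix n n B)
    (Φ : n → n → n → n → (A ⊗[R] A' →ₗ[R] B))
    (hΦ : ∀ k j i l s t, Φ k j i l (s ⊗ₜ[R] t) = φ s k j * ψ t i l)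
    (b : A) (w : A ⊗[R] A') (i j k m : n) :
    Φ k j i m (w * (b ⊗ₜ[R] (1 : A'))) = ∑ l, φ b l j * Φ k l i m w := by
  induction w using TensorProduct.induction_on with
  | zero => simp
  | tmul s t =>
    simp only [Algebra.TensorProduct.tmul_mul_tmul, mul_one, hΦ, map_mul, Matrix.mul_apply,
      Finset.sum_mul]
    exact Finset.sum_congr rfl fun l _ => by ring
  | add u v hu hv => simp only [add_mul, map_add, hu, hv, mul_add, Finset.sum_add_distrib]

end EntryPairing

theorem stmt2_general {A B : Type*} [Ring A] [Algebra ℂ A] [CommRing B] [Algebra ℂ B]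
    (N : ℕ)
    (φ : A →ₐ[ℂ] Matrix (Fin N) (Fin N) B)
    (db : A ⊗[ℂ] A →ₗ[ℂ] A ⊗[ℂ] A)
    (hLeibR : ∀ a b c : A, db (a ⊗ₜ[ℂ] (b * c)) =
      (b ⊗ₜ[ℂ] (1 : A)) * db (a ⊗ₜ[ℂ] c) + db (a ⊗ₜ[ℂ] b) * ((1 : A) ⊗ₜ[ℂ] c))
    (hLeibL : ∀ a b c : A, db ((a * b) ⊗ₜ[ℂ] c) =
      ((1 : A) ⊗ₜ[ℂ] a) * db (b ⊗ₜ[ℂ] c) + db (a ⊗ₜ[ℂ] c) * (b ⊗ₜ[ℂ] (1 : A)))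
    (Φ : Fin N → Fin N → Fin N → Fin N → (A ⊗[ℂ] A →ₗ[ℂ] B))
    (hΦ : ∀ (k j i l : Fin N) (s t : A),
      Φ k j i l (s ⊗ₜ[ℂ] t) = φ s k j * φ t i l) :
    (∀ (x y z : A) (i j k m : Fin N),
      Φ k j i m (db (x ⊗ₜ[ℂ] (y * z))) =
        (∑ l, φ y k l * Φ l j i m (db (x ⊗ₜ[ℂ] z))) +
        (∑ l, Φ k j i l (db (x ⊗ₜ[ℂ] y)) * φ z l m)) ∧
    (∀ (x y z : A) (i j k m : Fin N),
      Φ k j i m (db ((x * y) ⊗ₜ[ℂ] z)) =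
        (∑ l, φ x i l * Φ k j l m (db (y ⊗ₜ[ℂ] z))) +
        (∑ l, φ y l j * Φ k l i m (db (x ⊗ₜ[ℂ] z)))) := by
  constructor
  · intro x y z i j k m
    rw [hLeibR, map_add, entryPairing_tmul_one_mul φ φ Φ hΦ,
      entryPairing_mul_one_tmul φ φ Φ hΦ]
  · intro x y z i j k m
    rw [hLeibL, map_add, entryPairing_one_tmul_mul φ φ Φ hΦ,
      entryPairing_mul_tmul_one φ φ Φ hΦ]

/-- The matrix-entry pairing `Φ` of a double bracket satisfies the
Leibniz rules in both arguments with respect to matrix entries. -/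
theorem stmt2 {A B : Type*} [Ring A] [Algebra ℂ A] [CommRing B] [Algebra ℂ B]
    (N : ℕ) (hN : 0 < N)
    (φ : A →ₐ[ℂ] Matrix (Fin N) (Fin N) B)
    (db : A ⊗[ℂ] A →ₗ[ℂ] A ⊗[ℂ] A)
    (hLeibR : ∀ a b c : A, db (a ⊗ₜ[ℂ] (b * c)) =
      (b ⊗ₜ[ℂ] (1 : A)) * db (a ⊗ₜ[ℂ] c) + db (a ⊗ₜ[ℂ] b) * ((1 : A) ⊗ₜ[ℂ] c))
    (hLeibL : ∀ a b c : A, db ((a * b) ⊗ₜ[ℂ] c) =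
      ((1 : A) ⊗ₜ[ℂ] a) * db (b ⊗ₜ[ℂ] c) + db (a ⊗ₜ[ℂ] c) * (b ⊗ₜ[ℂ] (1 : A)))
    (Φ : Fin N → Fin N → Fin N → Fin N → (A ⊗[ℂ] A →ₗ[ℂ] B))
    (hΦ : ∀ (k j i l : Fin N) (s t : A),
      Φ k j i l (s ⊗ₜ[ℂ] t) = φ s k j * φ t i l) :
    (∀ (x y z : A) (i j k m : Fin N),
      Φ k j i m (db (x ⊗ₜ[ℂ] (y * z))) =
        (∑ l, φ y k l * Φ l j i m (db (x ⊗ₜ[ℂ] z))) +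
        (∑ l, Φ k j i l (db (x ⊗ₜ[ℂ] y)) * φ z l m)) ∧
    (∀ (x y z : A) (i j k m : Fin N),
      Φ k j i m (db ((x * y) ⊗ₜ[ℂ] z)) =
        (∑ l, φ x i l * Φ k j l m (db (y ⊗ₜ[ℂ] z))) +
        (∑ l, φ y l j * Φ k l i m (db (x ⊗ₜ[ℂ] z)))) :=
  stmt2_general N φ db hLeibR hLeibL Φ hΦ
end

section
/- For all x,y ∈ A and all indices k,l ∈ {1,…,N}: P(Tr(φ(x)), φ(y)_{kl}) = φ({x,y})_{kl}, where {x,y} = μ(db(x ⊗ y)). Equivalently, Σ_{i=1}^{N} Φ_{ki,il}(x,y) = φ(μ(db(x ⊗ y)))_{kl}. -/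
/-!
The trace is the sum of the diagonal entries, so bilinearity of `P` and its compatibility with
`φ` turn `P(Tr φ(x), φ(y)_{kl})` into `Σ_i Φ_{ki,il}(db(x ⊗ y))`. On a pure tensor `s ⊗ t` this sum
is `Σ_i φ(s)_{ki} φ(t)_{il} = φ(st)_{kl}`, and both sides are linear in the tensor.
-/

open TensorProduct

theorem Matrix.sum_eq_apply_mul'_of_tmul {R A B n : Type*} [CommSemiring R] [Semiring A]
    [Algebra R A] [Semiring B] [Algebra R B] [Fintype n] [DecidableEq n]
    (φ : A →ₐ[R] Matrix n n B) (f : n → A ⊗[R] A →ₗ[R] B) (k l : n)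
    (hf : ∀ i s t, f i (s ⊗ₜ t) = φ s k i * φ t i l) (u : A ⊗[R] A) :
    ∑ i, f i u = φ (LinearMap.mul' R A u) k l := by
  induction u using TensorProduct.induction_on with
  | zero => simp
  | tmul s t => simp only [hf, LinearMap.mul'_apply, map_mul, Matrix.mul_apply]
  | add u v hu hv => simp only [map_add, Matrix.add_apply, Finset.sum_add_distrib, hu, hv]

theorem stmt3_general {A B : Type*} [Ring A] [Algebra ℂ A] [CommRing B] [Algebra ℂ B]
    (N : ℕ)
    (φ : A →ₐ[ℂ] Matrix (Fin N) (Fin N) B)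
    (db : A ⊗[ℂ] A →ₗ[ℂ] A ⊗[ℂ] A)
    (Φ : Fin N → Fin N → Fin N → Fin N → (A ⊗[ℂ] A →ₗ[ℂ] B))
    (hΦ : ∀ (k j i l : Fin N) (s t : A),
      Φ k j i l (s ⊗ₜ[ℂ] t) = φ s k j * φ t i l)
    (P : B →ₗ[ℂ] B →ₗ[ℂ] B)
    (hPφ : ∀ (x y : A) (i j k l : Fin N),
      P (φ x i j) (φ y k l) = Φ k j i l (db (x ⊗ₜ[ℂ] y))) :
    (∀ (x y : A) (k l : Fin N),
      P (Matrix.trace (φ x)) (φ y k l) =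
        φ (LinearMap.mul' ℂ A (db (x ⊗ₜ[ℂ] y))) k l) ∧
    (∀ (x y : A) (k l : Fin N),
      (∑ i, Φ k i i l (db (x ⊗ₜ[ℂ] y))) =
        φ (LinearMap.mul' ℂ A (db (x ⊗ₜ[ℂ] y))) k l) := by
  have contraction : ∀ (x y : A) (k l : Fin N),
      ∑ i, Φ k i i l (db (x ⊗ₜ[ℂ] y)) = φ (LinearMap.mul' ℂ A (db (x ⊗ₜ[ℂ] y))) k l :=
    fun x y k l =>
      Matrix.sum_eq_apply_mul'_of_tmul φ (fun i => Φ k i i l) k l (fun i => hΦ k i i l) _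
  refine ⟨fun x y k l => ?_, contraction⟩
  rw [← contraction, Matrix.trace, map_sum, LinearMap.coe_sum, Finset.sum_apply]
  exact Finset.sum_congr rfl fun i _ => hPφ x y i i k l

/-- `P(Tr(φ(x)), φ(y)_{kl}) = φ({x,y})_{kl}`, where `{x,y} = μ(db(x⊗y))`. -/
theorem stmt3 {A B : Type*} [Ring A] [Algebra ℂ A] [CommRing B] [Algebra ℂ B]
    (N : ℕ) (hN : 0 < N)
    (φ : A →ₐ[ℂ] Matrix (Fin N) (Fin N) B)
    (db : A ⊗[ℂ] A →ₗ[ℂ] A ⊗[ℂ] A)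
    (hLeibR : ∀ a b c : A, db (a ⊗ₜ[ℂ] (b * c)) =
      (b ⊗ₜ[ℂ] (1 : A)) * db (a ⊗ₜ[ℂ] c) + db (a ⊗ₜ[ℂ] b) * ((1 : A) ⊗ₜ[ℂ] c))
    (hLeibL : ∀ a b c : A, db ((a * b) ⊗ₜ[ℂ] c) =
      ((1 : A) ⊗ₜ[ℂ] a) * db (b ⊗ₜ[ℂ] c) + db (a ⊗ₜ[ℂ] c) * (b ⊗ₜ[ℂ] (1 : A)))
    (Φ : Fin N → Fin N → Fin N → Fin N → (A ⊗[ℂ] A →ₗ[ℂ] B))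
    (hΦ : ∀ (k j i l : Fin N) (s t : A),
      Φ k j i l (s ⊗ₜ[ℂ] t) = φ s k j * φ t i l)
    (P : B →ₗ[ℂ] B →ₗ[ℂ] B)
    (hPL : ∀ a b c : B, P (a * b) c = a * P b c + b * P a c)
    (hPR : ∀ a b c : B, P a (b * c) = c * P a b + b * P a c)
    (hPφ : ∀ (x y : A) (i j k l : Fin N),
      P (φ x i j) (φ y k l) = Φ k j i l (db (x ⊗ₜ[ℂ] y))) :
    (∀ (x y : A) (k l : Fin N),
      P (Matrix.trace (φ x)) (φ y k l) =
        φ (LinearMap.mul' ℂ A (db (x ⊗ₜ[ℂ] y))) k l) ∧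
    (∀ (x y : A) (k l : Fin N),
      (∑ i, Φ k i i l (db (x ⊗ₜ[ℂ] y))) =
        φ (LinearMap.mul' ℂ A (db (x ⊗ₜ[ℂ] y))) k l) :=
  stmt3_general N φ db Φ hΦ P hPφ
end

section
/- For all f,g ∈ T one has P(f,g) ∈ T and P(f,g) = −P(g,f); that is, the restriction of P to the subalgebra T generated by traces is a skew-symmetric bracket taking values in T. -/
/-!
Since `P` is a derivation in each argument, both `P(f, g) ∈ T` and `P(f, g) = -P(g, f)`
propagate from the generators `Tr φ(x)` of `T` to all of `T`. On generators the compatibility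
of `P` with `db` gives `P(Tr φ(x), Tr φ(y)) = Tr φ({x, y})`, which lies in `T`, and
`{x, y} + {y, x}` is a sum of commutators, on which `Tr ∘ φ` vanishes.
-/

open TensorProduct

section Biderivation

variable {R B : Type*} [CommRing R] [CommRing B] [Algebra R B] (P : B →ₗ[R] B →ₗ[R] B)

def SkewAt (S : Subalgebra R B) (f g : B) : Prop := P f g ∈ S ∧ P f g = -P g f

variable {P}

theorem SkewAt.symm {S : Subalgebra R B} {f g : B} (h : SkewAt P S f g) : SkewAt P S g f := by
  obtain ⟨hmem, hskew⟩ := h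
  refine ⟨?_, by rw [hskew, neg_neg]⟩
  rw [eq_neg_iff_add_eq_zero, add_comm, ← eq_neg_iff_add_eq_zero] at hskew
  rw [hskew]
  exact S.neg_mem hmem

variable (hPL : ∀ a b c : B, P (a * b) c = a * P b c + b * P a c)
  (hPR : ∀ a b c : B, P a (b * c) = c * P a b + b * P a c)
include hPL hPR

omit hPR in
theorem apply_algebraMap_left (r : R) (g : B) : P (algebraMap R B r) g = 0 := by
  have h := hPL 1 1 g
  rw [one_mul, one_mul, left_eq_add] at h
  rw [Algebra.algebraMap_eq_smul_one, map_smul, LinearMap.smul_apply, h, smul_zero]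

omit hPL in
theorem apply_algebraMap_right (r : R) (g : B) : P g (algebraMap R B r) = 0 := by
  have h := hPR g 1 1
  rw [one_mul, one_mul, left_eq_add] at h
  rw [Algebra.algebraMap_eq_smul_one, map_smul, h, smul_zero]

theorem skewAt_adjoin_right {s : Set B} {f : B}
    (hf : ∀ y ∈ s, SkewAt P (Algebra.adjoin R s) f y) :
    ∀ g ∈ Algebra.adjoin R s, SkewAt P (Algebra.adjoin R s) f g := by
  intro g hg
  induction hg using Algebra.adjoin_induction with
  | mem y hy => exact hf y hy
  | algebraMap r =>
    rw [SkewAt, apply_algebraMap_right hPR, apply_algebraMap_left hPL, neg_zero]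
    exact ⟨Subalgebra.zero_mem _, rfl⟩
  | add a b _ _ iha ihb =>
    refine ⟨?_, ?_⟩
    · rw [map_add]
      exact Subalgebra.add_mem _ iha.1 ihb.1
    · rw [map_add, iha.2, ihb.2, map_add, LinearMap.add_apply, neg_add]
  | mul a b ha hb iha ihb =>
    refine ⟨?_, ?_⟩
    · rw [hPR]
      exact Subalgebra.add_mem _ (Subalgebra.mul_mem _ hb iha.1) (Subalgebra.mul_mem _ ha ihb.1)
    · rw [hPR, hPL, iha.2, ihb.2]
      ring

theorem skewAt_adjoin {s : Set B}
    (hs : ∀ x ∈ s, ∀ y ∈ s, SkewAt P (Algebra.adjoin R s) x y) :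
    ∀ f ∈ Algebra.adjoin R s, ∀ g ∈ Algebra.adjoin R s, SkewAt P (Algebra.adjoin R s) f g := by
  have generator_left :
      ∀ x ∈ s, ∀ g ∈ Algebra.adjoin R s, SkewAt P (Algebra.adjoin R s) x g :=
    fun x hx => skewAt_adjoin_right hPL hPR (hs x hx)
  intro f hf
  exact skewAt_adjoin_right hPL hPR fun y hy => (generator_left y hy f hf).symm

end Biderivation

section Trace

variable {R A B n : Type*} [CommRing R] [Ring A] [Algebra R A] [CommRing B] [Algebra R B]
  [Fintype n] [DecidableEq n] (φ : A →ₐ[R] Matrix n n B)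

theorem trace_eq_zero_of_mem_span_commutators {z : A}
    (hz : z ∈ Submodule.span R {z : A | ∃ x y : A, z = x * y - y * x}) :
    Matrix.trace (φ z) = 0 := by
  suffices h : Submodule.span R {z : A | ∃ x y : A, z = x * y - y * x} ≤
      LinearMap.ker ((Matrix.traceLinearMap n R B).comp φ.toLinearMap) from h hz
  rw [Submodule.span_le]
  rintro _ ⟨x, y, rfl⟩
  rw [SetLike.mem_coe, LinearMap.mem_ker, LinearMap.comp_apply, AlgHom.toLinearMap_apply,
    Matrix.traceLinearMap_apply, map_sub, map_mul, map_mul, Matrix.trace_sub,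
    Matrix.trace_mul_comm, sub_self]

theorem sum_apply_eq_trace_mul' (Φ : n → n → n → n → (A ⊗[R] A →ₗ[R] B))
    (hΦ : ∀ (k j i l : n) (s t : A), Φ k j i l (s ⊗ₜ[R] t) = φ s k j * φ t i l)
    (z : A ⊗[R] A) :
    ∑ i, ∑ k, Φ k i i k z = Matrix.trace (φ (LinearMap.mul' R A z)) := by
  induction z using TensorProduct.induction_on with
  | zero => simp
  | tmul s t =>
    simp only [hΦ, LinearMap.mul'_apply, map_mul, Matrix.trace, Matrix.diag_apply,
      Matrix.mul_apply]
    exact Finset.sum_comm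
  | add z w hz hw => simp only [map_add, Matrix.trace_add, ← hz, ← hw, Finset.sum_add_distrib]

theorem apply_trace_trace (db : A ⊗[R] A →ₗ[R] A ⊗[R] A)
    (Φ : n → n → n → n → (A ⊗[R] A →ₗ[R] B))
    (hΦ : ∀ (k j i l : n) (s t : A), Φ k j i l (s ⊗ₜ[R] t) = φ s k j * φ t i l)
    (P : B →ₗ[R] B →ₗ[R] B)
    (hPφ : ∀ (x y : A) (i j k l : n), P (φ x i j) (φ y k l) = Φ k j i l (db (x ⊗ₜ[R] y)))
    (x y : A) :
    P (Matrix.trace (φ x)) (Matrix.trace (φ y)) =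
      Matrix.trace (φ (LinearMap.mul' R A (db (x ⊗ₜ[R] y)))) := by
  rw [← sum_apply_eq_trace_mul' φ Φ hΦ]
  simp only [Matrix.trace, Matrix.diag_apply, map_sum, LinearMap.sum_apply, hPφ]
  exact Finset.sum_comm

end Trace

theorem stmt4_general {A B : Type*} [Ring A] [Algebra ℂ A] [CommRing B] [Algebra ℂ B]
    (N : ℕ)
    (φ : A →ₐ[ℂ] Matrix (Fin N) (Fin N) B)
    (db : A ⊗[ℂ] A →ₗ[ℂ] A ⊗[ℂ] A)
    (hSkew : ∀ a b : A,
      LinearMap.mul' ℂ A (db (a ⊗ₜ[ℂ] b)) + LinearMap.mul' ℂ A (db (b ⊗ₜ[ℂ] a)) ∈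
      Submodule.span ℂ {z : A | ∃ x y : A, z = x * y - y * x})
    (Φ : Fin N → Fin N → Fin N → Fin N → (A ⊗[ℂ] A →ₗ[ℂ] B))
    (hΦ : ∀ (k j i l : Fin N) (s t : A),
      Φ k j i l (s ⊗ₜ[ℂ] t) = φ s k j * φ t i l)
    (P : B →ₗ[ℂ] B →ₗ[ℂ] B)
    (hPL : ∀ a b c : B, P (a * b) c = a * P b c + b * P a c)
    (hPR : ∀ a b c : B, P a (b * c) = c * P a b + b * P a c)
    (hPφ : ∀ (x y : A) (i j k l : Fin N),
      P (φ x i j) (φ y k l) = Φ k j i l (db (x ⊗ₜ[ℂ] y)))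
    (T : Subalgebra ℂ B)
    (hT : T = Algebra.adjoin ℂ (Set.range fun x : A => Matrix.trace (φ x))) :
    ∀ f ∈ T, ∀ g ∈ T, P f g ∈ T ∧ P f g = - P g f := by
  have hbracket := apply_trace_trace φ db Φ hΦ P hPφ
  subst hT
  refine skewAt_adjoin hPL hPR ?_
  rintro _ ⟨x, rfl⟩ _ ⟨y, rfl⟩
  refine ⟨?_, ?_⟩
  · rw [hbracket]
    exact Algebra.subset_adjoin ⟨_, rfl⟩
  · rw [eq_neg_iff_add_eq_zero, hbracket, hbracket, ← Matrix.trace_add, ← map_add]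
    exact trace_eq_zero_of_mem_span_commutators φ (hSkew x y)

/-- The restriction of `P` to the trace subalgebra `T` is a
skew-symmetric bracket taking values in `T`. -/
theorem stmt4 {A B : Type*} [Ring A] [Algebra ℂ A] [CommRing B] [Algebra ℂ B]
    (N : ℕ) (hN : 0 < N)
    (φ : A →ₐ[ℂ] Matrix (Fin N) (Fin N) B)
    (db : A ⊗[ℂ] A →ₗ[ℂ] A ⊗[ℂ] A)
    (hLeibR : ∀ a b c : A, db (a ⊗ₜ[ℂ] (b * c)) =
      (b ⊗ₜ[ℂ] (1 : A)) * db (a ⊗ₜ[ℂ] c) + db (a ⊗ₜ[ℂ] b) * ((1 : A) ⊗ₜ[ℂ] c))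
    (hLeibL : ∀ a b c : A, db ((a * b) ⊗ₜ[ℂ] c) =
      ((1 : A) ⊗ₜ[ℂ] a) * db (b ⊗ₜ[ℂ] c) + db (a ⊗ₜ[ℂ] c) * (b ⊗ₜ[ℂ] (1 : A)))
    (hJac : ∀ a b c : A,
      LinearMap.mul' ℂ A (db (a ⊗ₜ[ℂ] LinearMap.mul' ℂ A (db (b ⊗ₜ[ℂ] c)))) -
      LinearMap.mul' ℂ A (db (b ⊗ₜ[ℂ] LinearMap.mul' ℂ A (db (a ⊗ₜ[ℂ] c)))) =
      LinearMap.mul' ℂ A (db (LinearMap.mul' ℂ A (db (a ⊗ₜ[ℂ] b)) ⊗ₜ[ℂ] c)))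
    (hSkew : ∀ a b : A,
      LinearMap.mul' ℂ A (db (a ⊗ₜ[ℂ] b)) + LinearMap.mul' ℂ A (db (b ⊗ₜ[ℂ] a)) ∈
      Submodule.span ℂ {z : A | ∃ x y : A, z = x * y - y * x})
    (Φ : Fin N → Fin N → Fin N → Fin N → (A ⊗[ℂ] A →ₗ[ℂ] B))
    (hΦ : ∀ (k j i l : Fin N) (s t : A),
      Φ k j i l (s ⊗ₜ[ℂ] t) = φ s k j * φ t i l)
    (P : B →ₗ[ℂ] B →ₗ[ℂ] B)
    (hPL : ∀ a b c : B, P (a * b) c = a * P b c + b * P a c)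
    (hPR : ∀ a b c : B, P a (b * c) = c * P a b + b * P a c)
    (hPφ : ∀ (x y : A) (i j k l : Fin N),
      P (φ x i j) (φ y k l) = Φ k j i l (db (x ⊗ₜ[ℂ] y)))
    (T : Subalgebra ℂ B)
    (hT : T = Algebra.adjoin ℂ (Set.range fun x : A => Matrix.trace (φ x))) :
    ∀ f ∈ T, ∀ g ∈ T, P f g ∈ T ∧ P f g = - P g f :=
  stmt4_general N φ db hSkew Φ hΦ P hPL hPR hPφ T hT
end

section
/- The restriction of P to T is a Poisson bracket on T: for all f,g,h ∈ T, P(f,g) ∈ T, P(f,g) = −P(g,f), P(fg,h) = f·P(g,h) + g·P(f,h), and P(f, P(g,h)) = P(P(f,g), h) + P(g, P(f,h)). -/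
/-!
`P` is a derivation in each argument, and a derivation that vanishes on (or maps into `T`) the
generators `Tr φ(x)` of `T` does so on all of `T`. The Jacobiator
`P f (P g h) - P (P f g) h - P g (P f h)` is again a derivation in `g` and in `h`, and in `f`
once `P` is known to be antisymmetric on `T`; so closure, antisymmetry and the Jacobi identity
only need checking on generators. There, compatibility with `db` gives
`P (Tr φ(x)) (Tr φ(y)) = Tr φ({x, y})`, and since the trace kills `[A, A]` the three properties
follow from those of `{-, -}` on `A` modulo commutators.
-/

open TensorProduct Algebra

section Leibniz

variable {R B : Type*} [CommRing R] [CommRing B] [Algebra R B]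

def IsLeibnizOn (D : B →ₗ[R] B) (S : Subalgebra R B) : Prop :=
  ∀ a ∈ S, ∀ b ∈ S, D (a * b) = a * D b + b * D a

namespace IsLeibnizOn

variable {D : B →ₗ[R] B} {S : Subalgebra R B}

theorem map_algebraMap (hD : IsLeibnizOn D S) (r : R) : D (algebraMap R B r) = 0 := by
  have h1 : D 1 = 0 := by simpa using hD 1 S.one_mem 1 S.one_mem
  rw [Algebra.algebraMap_eq_smul_one, map_smul, h1, smul_zero]

theorem eq_zero_of_mem_adjoin {s : Set B} (hD : IsLeibnizOn D (adjoin R s))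
    (hs : ∀ x ∈ s, D x = 0) : ∀ x ∈ adjoin R s, D x = 0 := by
  intro x hx
  induction hx using Algebra.adjoin_induction with
  | mem x hx => exact hs x hx
  | algebraMap r => exact hD.map_algebraMap r
  | add x y _ _ hx hy => rw [map_add, hx, hy, add_zero]
  | mul x y hx' hy' hx hy => rw [hD x hx' y hy', hx, hy, mul_zero, mul_zero, add_zero]

theorem mem_adjoin {s : Set B} (hD : IsLeibnizOn D (adjoin R s))
    (hs : ∀ x ∈ s, D x ∈ adjoin R s) : ∀ x ∈ adjoin R s, D x ∈ adjoin R s := by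
  intro x hx
  induction hx using Algebra.adjoin_induction with
  | mem x hx => exact hs x hx
  | algebraMap r => rw [hD.map_algebraMap r]; exact zero_mem _
  | add x y _ _ hx hy => rw [map_add]; exact add_mem hx hy
  | mul x y hx' hy' hx hy =>
    rw [hD x hx' y hy']
    exact add_mem (mul_mem hx' hy) (mul_mem hy' hx)

end IsLeibnizOn

end Leibniz

section Biderivation

variable {R B : Type*} [CommRing R] [CommRing B] [Algebra R B] (P : B →ₗ[R] B →ₗ[R] B)
  (hPL : ∀ a b c : B, P (a * b) c = a * P b c + b * P a c)
  (hPR : ∀ a b c : B, P a (b * c) = c * P a b + b * P a c)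
  {s : Set B}

include hPL hPR

theorem biderivation_apply_mem_adjoin (hs : ∀ x ∈ s, ∀ y ∈ s, P x y ∈ adjoin R s) :
    ∀ f ∈ adjoin R s, ∀ g ∈ adjoin R s, P f g ∈ adjoin R s := by
  have hright : ∀ x ∈ s, ∀ g ∈ adjoin R s, P x g ∈ adjoin R s := fun x hx =>
    IsLeibnizOn.mem_adjoin (fun a _ b _ => by rw [hPR, add_comm]) (hs x hx)
  intro f hf g hg
  exact IsLeibnizOn.mem_adjoin (D := P.flip g) (fun a _ b _ => hPL a b g)
    (fun x hx => hright x hx g hg) f hf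

theorem biderivation_antisymm_on_adjoin (hs : ∀ x ∈ s, ∀ y ∈ s, P x y + P y x = 0) :
    ∀ f ∈ adjoin R s, ∀ g ∈ adjoin R s, P f g + P g f = 0 := by
  have hright : ∀ x ∈ s, ∀ g ∈ adjoin R s, P x g + P g x = 0 := fun x hx =>
    IsLeibnizOn.eq_zero_of_mem_adjoin (D := P x + P.flip x)
      (fun a _ b _ => by simp only [LinearMap.add_apply, LinearMap.flip_apply, hPL, hPR]; ring)
      (hs x hx)
  intro f hf g hg
  exact IsLeibnizOn.eq_zero_of_mem_adjoin (D := P.flip g + P g)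
    (fun a _ b _ => by simp only [LinearMap.add_apply, LinearMap.flip_apply, hPL, hPR]; ring)
    (fun x hx => by simpa [add_comm] using hright x hx g hg) f hf

theorem biderivation_jacobi_on_adjoin
    (hanti : ∀ f ∈ adjoin R s, ∀ g ∈ adjoin R s, P f g + P g f = 0)
    (hs : ∀ x ∈ s, ∀ y ∈ s, ∀ z ∈ s, P x (P y z) = P (P x y) z + P y (P x z)) :
    ∀ f ∈ adjoin R s, ∀ g ∈ adjoin R s, ∀ h ∈ adjoin R s,
      P f (P g h) = P (P f g) h + P g (P f h) := by
  have hright : ∀ x ∈ s, ∀ y ∈ s, ∀ h ∈ adjoin R s,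
      P x (P y h) - P (P x y) h - P y (P x h) = 0 := fun x hx y hy =>
    IsLeibnizOn.eq_zero_of_mem_adjoin (D := P x ∘ₗ P y - P (P x y) - P y ∘ₗ P x)
      (fun a _ b _ => by simp only [LinearMap.sub_apply, LinearMap.comp_apply, hPR, map_add]; ring)
      (fun z hz => by
        simp only [LinearMap.sub_apply, LinearMap.comp_apply, hs x hx y hy z hz]; ring)
  have hmiddle : ∀ x ∈ s, ∀ g ∈ adjoin R s, ∀ h ∈ adjoin R s,
      P x (P g h) - P (P x g) h - P g (P x h) = 0 := fun x hx g hg h hh =>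
    IsLeibnizOn.eq_zero_of_mem_adjoin
      (D := P x ∘ₗ P.flip h - P.flip h ∘ₗ P x - P.flip (P x h))
      (fun a _ b _ => by
        simp only [LinearMap.sub_apply, LinearMap.comp_apply, LinearMap.flip_apply, hPL, hPR,
          map_add]
        ring)
      (fun y hy => hright x hx y hy h hh) g hg
  intro f hf g hg h hh
  have hleft := IsLeibnizOn.eq_zero_of_mem_adjoin
    (D := P.flip (P g h) - P.flip h ∘ₗ P.flip g - P g ∘ₗ P.flip h)
    (fun a ha b hb => by
      simp only [LinearMap.sub_apply, LinearMap.comp_apply, LinearMap.flip_apply, hPL, hPR,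
        map_add]
      linear_combination -(P a h) * hanti b hb g hg - (P b h) * hanti a ha g hg)
    (fun x hx => hmiddle x hx g hg h hh) f hf
  simp only [LinearMap.sub_apply, LinearMap.comp_apply, LinearMap.flip_apply] at hleft
  linear_combination hleft

end Biderivation

section Trace

variable {R A B : Type*} [CommRing R] [Ring A] [Algebra R A] [CommRing B] [Algebra R B]
  {n : Type*} [Fintype n] [DecidableEq n] (φ : A →ₐ[R] Matrix n n B)

theorem trace_map_eq_zero_of_mem_span_commutators {a : A}
    (ha : a ∈ Submodule.span R {z : A | ∃ x y : A, z = x * y - y * x}) :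
    Matrix.trace (φ a) = 0 := by
  suffices h : Submodule.span R {z : A | ∃ x y : A, z = x * y - y * x} ≤
      LinearMap.ker (Matrix.traceLinearMap n R B ∘ₗ φ.toLinearMap) from h ha
  rw [Submodule.span_le]
  rintro _ ⟨x, y, rfl⟩
  simp only [SetLike.mem_coe, LinearMap.mem_ker, LinearMap.comp_apply, AlgHom.toLinearMap_apply,
    Matrix.traceLinearMap_apply, map_sub, map_mul]
  rw [Matrix.trace_mul_comm, sub_self]

variable {Φ : n → n → n → n → (A ⊗[R] A →ₗ[R] B)}
  (hΦ : ∀ (k j i l : n) (s t : A), Φ k j i l (s ⊗ₜ[R] t) = φ s k j * φ t i l)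
include hΦ

theorem trace_map_mul'_eq_sum (z : A ⊗[R] A) :
    Matrix.trace (φ (LinearMap.mul' R A z)) = ∑ i, ∑ l, Φ l i i l z := by
  induction z using TensorProduct.induction_on with
  | zero => simp
  | tmul s t =>
    simp only [hΦ, LinearMap.mul'_apply, map_mul, Matrix.trace, Matrix.diag, Matrix.mul_apply]
    exact Finset.sum_comm
  | add u v hu hv => simp only [map_add, Matrix.trace_add, hu, hv, Finset.sum_add_distrib]

theorem apply_trace_trace_eq_trace_mul' (db : A ⊗[R] A →ₗ[R] A ⊗[R] A)
    {P : B →ₗ[R] B →ₗ[R] B}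
    (hPφ : ∀ (x y : A) (i j k l : n), P (φ x i j) (φ y k l) = Φ k j i l (db (x ⊗ₜ[R] y)))
    (x y : A) :
    P (Matrix.trace (φ x)) (Matrix.trace (φ y)) =
      Matrix.trace (φ (LinearMap.mul' R A (db (x ⊗ₜ[R] y)))) := by
  rw [trace_map_mul'_eq_sum φ hΦ]
  simp only [Matrix.trace, Matrix.diag, map_sum, LinearMap.sum_apply, hPφ]
  exact Finset.sum_comm

end Trace

theorem stmt6_general {A B : Type*} [Ring A] [Algebra ℂ A] [CommRing B] [Algebra ℂ B]
    (N : ℕ)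
    (φ : A →ₐ[ℂ] Matrix (Fin N) (Fin N) B)
    (db : A ⊗[ℂ] A →ₗ[ℂ] A ⊗[ℂ] A)
    (hJac : ∀ a b c : A,
      LinearMap.mul' ℂ A (db (a ⊗ₜ[ℂ] LinearMap.mul' ℂ A (db (b ⊗ₜ[ℂ] c)))) -
      LinearMap.mul' ℂ A (db (b ⊗ₜ[ℂ] LinearMap.mul' ℂ A (db (a ⊗ₜ[ℂ] c)))) =
      LinearMap.mul' ℂ A (db (LinearMap.mul' ℂ A (db (a ⊗ₜ[ℂ] b)) ⊗ₜ[ℂ] c)))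
    (hSkew : ∀ a b : A,
      LinearMap.mul' ℂ A (db (a ⊗ₜ[ℂ] b)) + LinearMap.mul' ℂ A (db (b ⊗ₜ[ℂ] a)) ∈
      Submodule.span ℂ {z : A | ∃ x y : A, z = x * y - y * x})
    (Φ : Fin N → Fin N → Fin N → Fin N → (A ⊗[ℂ] A →ₗ[ℂ] B))
    (hΦ : ∀ (k j i l : Fin N) (s t : A),
      Φ k j i l (s ⊗ₜ[ℂ] t) = φ s k j * φ t i l)
    (P : B →ₗ[ℂ] B →ₗ[ℂ] B)
    (hPL : ∀ a b c : B, P (a * b) c = a * P b c + b * P a c)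
    (hPR : ∀ a b c : B, P a (b * c) = c * P a b + b * P a c)
    (hPφ : ∀ (x y : A) (i j k l : Fin N),
      P (φ x i j) (φ y k l) = Φ k j i l (db (x ⊗ₜ[ℂ] y)))
    (T : Subalgebra ℂ B)
    (hT : T = Algebra.adjoin ℂ (Set.range fun x : A => Matrix.trace (φ x))) :
    ∀ f ∈ T, ∀ g ∈ T, ∀ h ∈ T,
      P f g ∈ T ∧
      P f g = - P g f ∧
      P (f * g) h = f * P g h + g * P f h ∧
      P f (P g h) = P (P f g) h + P g (P f h) := by
  subst hT
  set s : Set B := Set.range fun x : A => Matrix.trace (φ x)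
  have hP := apply_trace_trace_eq_trace_mul' φ hΦ db hPφ
  have hclosed : ∀ x ∈ s, ∀ y ∈ s, P x y ∈ adjoin ℂ s := by
    rintro _ ⟨x, rfl⟩ _ ⟨y, rfl⟩
    rw [hP]
    exact Algebra.subset_adjoin ⟨_, rfl⟩
  have hanti_traces : ∀ x ∈ s, ∀ y ∈ s, P x y + P y x = 0 := by
    rintro _ ⟨x, rfl⟩ _ ⟨y, rfl⟩
    rw [hP, hP, ← Matrix.trace_add, ← map_add]
    exact trace_map_eq_zero_of_mem_span_commutators φ (hSkew x y)
  have hjac_traces : ∀ x ∈ s, ∀ y ∈ s, ∀ z ∈ s, P x (P y z) = P (P x y) z + P y (P x z) := by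
    rintro _ ⟨x, rfl⟩ _ ⟨y, rfl⟩ _ ⟨z, rfl⟩
    simp only [hP]
    rw [← sub_eq_iff_eq_add, ← Matrix.trace_sub, ← map_sub, hJac]
  have hanti := biderivation_antisymm_on_adjoin P hPL hPR hanti_traces
  intro f hf g hg h hh
  exact ⟨biderivation_apply_mem_adjoin P hPL hPR hclosed f hf g hg,
    eq_neg_of_add_eq_zero_left (hanti f hf g hg), hPL f g h,
    biderivation_jacobi_on_adjoin P hPL hPR hanti hjac_traces f hf g hg h hh⟩

/-- The restriction of `P` to the trace subalgebra `T` is a Poisson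
bracket on `T`. -/
theorem stmt6 {A B : Type*} [Ring A] [Algebra ℂ A] [CommRing B] [Algebra ℂ B]
    (N : ℕ) (hN : 0 < N)
    (φ : A →ₐ[ℂ] Matrix (Fin N) (Fin N) B)
    (db : A ⊗[ℂ] A →ₗ[ℂ] A ⊗[ℂ] A)
    (hLeibR : ∀ a b c : A, db (a ⊗ₜ[ℂ] (b * c)) =
      (b ⊗ₜ[ℂ] (1 : A)) * db (a ⊗ₜ[ℂ] c) + db (a ⊗ₜ[ℂ] b) * ((1 : A) ⊗ₜ[ℂ] c))
    (hLeibL : ∀ a b c : A, db ((a * b) ⊗ₜ[ℂ] c) =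
      ((1 : A) ⊗ₜ[ℂ] a) * db (b ⊗ₜ[ℂ] c) + db (a ⊗ₜ[ℂ] c) * (b ⊗ₜ[ℂ] (1 : A)))
    (hJac : ∀ a b c : A,
      LinearMap.mul' ℂ A (db (a ⊗ₜ[ℂ] LinearMap.mul' ℂ A (db (b ⊗ₜ[ℂ] c)))) -
      LinearMap.mul' ℂ A (db (b ⊗ₜ[ℂ] LinearMap.mul' ℂ A (db (a ⊗ₜ[ℂ] c)))) =
      LinearMap.mul' ℂ A (db (LinearMap.mul' ℂ A (db (a ⊗ₜ[ℂ] b)) ⊗ₜ[ℂ] c)))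
    (hSkew : ∀ a b : A,
      LinearMap.mul' ℂ A (db (a ⊗ₜ[ℂ] b)) + LinearMap.mul' ℂ A (db (b ⊗ₜ[ℂ] a)) ∈
      Submodule.span ℂ {z : A | ∃ x y : A, z = x * y - y * x})
    (Φ : Fin N → Fin N → Fin N → Fin N → (A ⊗[ℂ] A →ₗ[ℂ] B))
    (hΦ : ∀ (k j i l : Fin N) (s t : A),
      Φ k j i l (s ⊗ₜ[ℂ] t) = φ s k j * φ t i l)
    (P : B →ₗ[ℂ] B →ₗ[ℂ] B)
    (hPL : ∀ a b c : B, P (a * b) c = a * P b c + b * P a c)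
    (hPR : ∀ a b c : B, P a (b * c) = c * P a b + b * P a c)
    (hPφ : ∀ (x y : A) (i j k l : Fin N),
      P (φ x i j) (φ y k l) = Φ k j i l (db (x ⊗ₜ[ℂ] y)))
    (T : Subalgebra ℂ B)
    (hT : T = Algebra.adjoin ℂ (Set.range fun x : A => Matrix.trace (φ x))) :
    ∀ f ∈ T, ∀ g ∈ T, ∀ h ∈ T,
      P f g ∈ T ∧
      P f g = - P g f ∧
      P (f * g) h = f * P g h + g * P f h ∧
      P f (P g h) = P (P f g) h + P g (P f h) :=
  stmt6_general N φ db hJac hSkew Φ hΦ P hPL hPR hPφ T hT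
end

section
/- Suppose c ∈ A is a right Casimir of the bracket {,}, i.e. μ(db(h ⊗ c)) = 0 for all h ∈ A. Then for every f ∈ T and every x in the ℂ-subalgebra of B generated by the matrix entries φ(c)_{kl} (k,l ∈ {1,…,N}), one has P(f, x) = 0. -/
/-!
For fixed `x`, `P (·) x` is a derivation of `B`, and so is `P f (·)` for fixed `f`; a derivation
vanishing on a generating set vanishes on the generated subalgebra. It therefore suffices to check
`P (Tr φ(h)) (φ(c)ₖₗ) = 0`. Summing the compatibility `P (φ(h)ᵢⱼ) (φ(c)ₖₗ) = Φₖⱼ,ᵢₗ(h, c)` over the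
diagonal `i = j` contracts the two tensor factors, giving `P (Tr φ(h)) (φ(c)ₖₗ) = φ({h, c})ₖₗ`,
which vanishes because `c` is a right Casimir.
-/

open TensorProduct

section Leibniz

variable {R B : Type*} [CommSemiring R] [CommRing B] [Algebra R B] (P : B →ₗ[R] B →ₗ[R] B)

theorem LinearMap.apply_eq_zero_of_mem_adjoin_left
    (hPL : ∀ a b c : B, P (a * b) c = a * P b c + b * P a c)
    {s : Set B} {x : B} (hs : ∀ f ∈ s, P f x = 0) :
    ∀ f ∈ Algebra.adjoin R s, P f x = 0 :=
  let D : Derivation R B B := Derivation.mk' (P.flip x) fun a b => hPL a b x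
  fun _ hf => Derivation.eqOn_adjoin (D1 := D) (D2 := 0) hs hf

theorem LinearMap.apply_eq_zero_of_mem_adjoin_right
    (hPR : ∀ a b c : B, P a (b * c) = c * P a b + b * P a c)
    {s : Set B} {f : B} (hs : ∀ x ∈ s, P f x = 0) :
    ∀ x ∈ Algebra.adjoin R s, P f x = 0 :=
  let D : Derivation R B B := Derivation.mk' (P f) fun a b => (hPR f a b).trans (add_comm _ _)
  fun _ hx => Derivation.eqOn_adjoin (D1 := D) (D2 := 0) hs hx

end Leibniz

section Trace

variable {R A B : Type*} [CommSemiring R] [Ring A] [Algebra R A] [CommRing B] [Algebra R B]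
  {N : ℕ} (φ : A →ₐ[R] Matrix (Fin N) (Fin N) B)
  {Φ : Fin N → Fin N → Fin N → Fin N → (A ⊗[R] A →ₗ[R] B)}

theorem sum_diag_eq_apply_mul'
    (hΦ : ∀ (k j i l : Fin N) (s t : A), Φ k j i l (s ⊗ₜ[R] t) = φ s k j * φ t i l)
    (k l : Fin N) (z : A ⊗[R] A) :
    ∑ i, Φ k i i l z = φ (LinearMap.mul' R A z) k l := by
  induction z using TensorProduct.induction_on with
  | zero => simp
  | tmul s t => simp [hΦ, Matrix.mul_apply]
  | add u v hu hv => simp [Finset.sum_add_distrib, hu, hv]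

theorem apply_trace_entry_eq_mul' (db : A ⊗[R] A →ₗ[R] A ⊗[R] A)
    (hΦ : ∀ (k j i l : Fin N) (s t : A), Φ k j i l (s ⊗ₜ[R] t) = φ s k j * φ t i l)
    (P : B →ₗ[R] B →ₗ[R] B)
    (hPφ : ∀ (x y : A) (i j k l : Fin N), P (φ x i j) (φ y k l) = Φ k j i l (db (x ⊗ₜ[R] y)))
    (x y : A) (k l : Fin N) :
    P (φ x).trace (φ y k l) = φ (LinearMap.mul' R A (db (x ⊗ₜ[R] y))) k l := by
  simp only [Matrix.trace, Matrix.diag, map_sum, LinearMap.sum_apply, hPφ]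
  exact sum_diag_eq_apply_mul' φ hΦ k l _

end Trace

theorem stmt7_general {A B : Type*} [Ring A] [Algebra ℂ A] [CommRing B] [Algebra ℂ B]
    (N : ℕ)
    (φ : A →ₐ[ℂ] Matrix (Fin N) (Fin N) B)
    (db : A ⊗[ℂ] A →ₗ[ℂ] A ⊗[ℂ] A)
    (Φ : Fin N → Fin N → Fin N → Fin N → (A ⊗[ℂ] A →ₗ[ℂ] B))
    (hΦ : ∀ (k j i l : Fin N) (s t : A),
      Φ k j i l (s ⊗ₜ[ℂ] t) = φ s k j * φ t i l)
    (P : B →ₗ[ℂ] B →ₗ[ℂ] B)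
    (hPL : ∀ a b c : B, P (a * b) c = a * P b c + b * P a c)
    (hPR : ∀ a b c : B, P a (b * c) = c * P a b + b * P a c)
    (hPφ : ∀ (x y : A) (i j k l : Fin N),
      P (φ x i j) (φ y k l) = Φ k j i l (db (x ⊗ₜ[ℂ] y)))
    (T : Subalgebra ℂ B)
    (hT : T = Algebra.adjoin ℂ (Set.range fun x : A => Matrix.trace (φ x)))
    (c : A)
    (hc : ∀ h : A, LinearMap.mul' ℂ A (db (h ⊗ₜ[ℂ] c)) = 0) :
    ∀ f ∈ T, ∀ x ∈ Algebra.adjoin ℂ {b : B | ∃ k l : Fin N, b = φ c k l},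
      P f x = 0 := by
  intro f hf x hx
  subst hT
  refine P.apply_eq_zero_of_mem_adjoin_left hPL ?_ f hf
  rintro _ ⟨h, rfl⟩
  refine P.apply_eq_zero_of_mem_adjoin_right hPR ?_ x hx
  rintro _ ⟨k, l, rfl⟩
  rw [apply_trace_entry_eq_mul' φ db hΦ P hPφ, hc, map_zero, Matrix.zero_apply]

/-- If `c` is a right Casimir of `{,}` then `P(f,x) = 0` for every
trace element `f ∈ T` and every `x` in the subalgebra generated by the entries of `φ(c)`. -/
theorem stmt7 {A B : Type*} [Ring A] [Algebra ℂ A] [CommRing B] [Algebra ℂ B]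
    (N : ℕ) (hN : 0 < N)
    (φ : A →ₐ[ℂ] Matrix (Fin N) (Fin N) B)
    (db : A ⊗[ℂ] A →ₗ[ℂ] A ⊗[ℂ] A)
    (hLeibR : ∀ a b c : A, db (a ⊗ₜ[ℂ] (b * c)) =
      (b ⊗ₜ[ℂ] (1 : A)) * db (a ⊗ₜ[ℂ] c) + db (a ⊗ₜ[ℂ] b) * ((1 : A) ⊗ₜ[ℂ] c))
    (hLeibL : ∀ a b c : A, db ((a * b) ⊗ₜ[ℂ] c) =
      ((1 : A) ⊗ₜ[ℂ] a) * db (b ⊗ₜ[ℂ] c) + db (a ⊗ₜ[ℂ] c) * (b ⊗ₜ[ℂ] (1 : A)))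
    (Φ : Fin N → Fin N → Fin N → Fin N → (A ⊗[ℂ] A →ₗ[ℂ] B))
    (hΦ : ∀ (k j i l : Fin N) (s t : A),
      Φ k j i l (s ⊗ₜ[ℂ] t) = φ s k j * φ t i l)
    (P : B →ₗ[ℂ] B →ₗ[ℂ] B)
    (hPL : ∀ a b c : B, P (a * b) c = a * P b c + b * P a c)
    (hPR : ∀ a b c : B, P a (b * c) = c * P a b + b * P a c)
    (hPφ : ∀ (x y : A) (i j k l : Fin N),
      P (φ x i j) (φ y k l) = Φ k j i l (db (x ⊗ₜ[ℂ] y)))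
    (T : Subalgebra ℂ B)
    (hT : T = Algebra.adjoin ℂ (Set.range fun x : A => Matrix.trace (φ x)))
    (c : A)
    (hc : ∀ h : A, LinearMap.mul' ℂ A (db (h ⊗ₜ[ℂ] c)) = 0) :
    ∀ f ∈ T, ∀ x ∈ Algebra.adjoin ℂ {b : B | ∃ k l : Fin N, b = φ c k l},
      P f x = 0 :=
  stmt7_general N φ db Φ hΦ P hPL hPR hPφ T hT c hc
end

section
/- The set C := {c ∈ A : μ(db(h ⊗ c)) = 0 for all h ∈ A} of right Casimir elements is a unital ℂ-subalgebra of A, and for every c ∈ C and every f ∈ T one has P(f, Tr(φ(c))) = 0; that is, the traces of right Casimir elements are Casimir elements of the restricted bracket on T. -/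
/-!
Right Casimirs form a subalgebra because `c ↦ μ(db(h ⊗ c))` obeys the Leibniz rule
`μ(db(h ⊗ cd)) = c·μ(db(h ⊗ d)) + μ(db(h ⊗ c))·d`, and `db(h ⊗ 1) = 0`.
For the traces, the compatibility of `P` with `Φ` gives
`P(Tr φ(x), Tr φ(c)) = Tr φ(μ(db(x ⊗ c)))`, which vanishes when `c` is a right Casimir;
since `P(-, Tr φ(c))` is a derivation of `B`, vanishing on the generators of `T` gives
vanishing on all of `T`.
-/

open TensorProduct

section Multiplication

variable {R A : Type*} [CommSemiring R] [Semiring A] [Algebra R A]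

theorem LinearMap.mul'_tmul_one_mul (c : A) (x : A ⊗[R] A) :
    LinearMap.mul' R A ((c ⊗ₜ[R] (1 : A)) * x) = c * LinearMap.mul' R A x := by
  induction x using TensorProduct.induction_on with
  | zero => simp
  | tmul s t => simp [Algebra.TensorProduct.tmul_mul_tmul, mul_assoc]
  | add x y hx hy => simp [mul_add, hx, hy]

theorem LinearMap.mul'_mul_one_tmul (c : A) (x : A ⊗[R] A) :
    LinearMap.mul' R A (x * ((1 : A) ⊗ₜ[R] c)) = LinearMap.mul' R A x * c := by
  induction x using TensorProduct.induction_on with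
  | zero => simp
  | tmul s t => simp [Algebra.TensorProduct.tmul_mul_tmul, mul_assoc]
  | add x y hx hy => simp [add_mul, hx, hy]

end Multiplication

section RightCasimir

variable {R A : Type*} [CommSemiring R] [Ring A] [Algebra R A]

theorem apply_tmul_one_eq_zero (db : A ⊗[R] A →ₗ[R] A ⊗[R] A)
    (hLeibR : ∀ a b c : A, db (a ⊗ₜ[R] (b * c)) =
      (b ⊗ₜ[R] (1 : A)) * db (a ⊗ₜ[R] c) + db (a ⊗ₜ[R] b) * ((1 : A) ⊗ₜ[R] c))
    (h : A) : db (h ⊗ₜ[R] (1 : A)) = 0 := by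
  have h11 := hLeibR h 1 1
  rw [one_mul, Algebra.TensorProduct.one_def.symm, one_mul, mul_one] at h11
  exact right_eq_add.mp h11

def rightCasimirSubalgebra (db : A ⊗[R] A →ₗ[R] A ⊗[R] A)
    (hLeibR : ∀ a b c : A, db (a ⊗ₜ[R] (b * c)) =
      (b ⊗ₜ[R] (1 : A)) * db (a ⊗ₜ[R] c) + db (a ⊗ₜ[R] b) * ((1 : A) ⊗ₜ[R] c)) :
    Subalgebra R A where
  carrier := {c | ∀ h : A, LinearMap.mul' R A (db (h ⊗ₜ[R] c)) = 0}
  mul_mem' {c d} hc hd h := by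
    rw [hLeibR, map_add, LinearMap.mul'_tmul_one_mul,
      LinearMap.mul'_mul_one_tmul, hc h, hd h, mul_zero, zero_mul, add_zero]
  add_mem' {c d} hc hd h := by
    rw [tmul_add, map_add, map_add, hc h, hd h, add_zero]
  algebraMap_mem' r h := by
    rw [Algebra.algebraMap_eq_smul_one, tmul_smul, map_smul,
      apply_tmul_one_eq_zero db hLeibR, smul_zero, map_zero]

end RightCasimir

section Traces

variable {R A B n : Type*} [CommSemiring R] [Semiring A] [Algebra R A]
  [CommSemiring B] [Algebra R B] [Fintype n] [DecidableEq n]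

theorem trace_map_mul'_eq_sum_s8 (φ : A →ₐ[R] Matrix n n B)
    (Φ : n → n → n → n → (A ⊗[R] A →ₗ[R] B))
    (hΦ : ∀ (k j i l : n) (s t : A), Φ k j i l (s ⊗ₜ[R] t) = φ s k j * φ t i l)
    (ω : A ⊗[R] A) :
    (φ (LinearMap.mul' R A ω)).trace = ∑ i, ∑ k, Φ k i i k ω := by
  induction ω using TensorProduct.induction_on with
  | zero => simp
  | tmul s t =>
    simp only [hΦ, LinearMap.mul'_apply, map_mul, Matrix.trace, Matrix.diag, Matrix.mul_apply]
    exact Finset.sum_comm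
  | add x y hx hy => simp only [map_add, Matrix.trace_add, Finset.sum_add_distrib, hx, hy]

theorem apply_trace_trace_eq_trace_map_mul' (φ : A →ₐ[R] Matrix n n B)
    (db : A ⊗[R] A →ₗ[R] A ⊗[R] A)
    (Φ : n → n → n → n → (A ⊗[R] A →ₗ[R] B))
    (hΦ : ∀ (k j i l : n) (s t : A), Φ k j i l (s ⊗ₜ[R] t) = φ s k j * φ t i l)
    (P : B →ₗ[R] B →ₗ[R] B)
    (hPφ : ∀ (x y : A) (i j k l : n), P (φ x i j) (φ y k l) = Φ k j i l (db (x ⊗ₜ[R] y)))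
    (x y : A) :
    P (φ x).trace (φ y).trace = (φ (LinearMap.mul' R A (db (x ⊗ₜ[R] y)))).trace := by
  rw [trace_map_mul'_eq_sum_s8 φ Φ hΦ, Finset.sum_comm]
  simp only [Matrix.trace, Matrix.diag, map_sum, LinearMap.sum_apply, hPφ]

end Traces

theorem apply_eq_zero_of_mem_adjoin {R B : Type*} [CommSemiring R] [CommRing B] [Algebra R B]
    (P : B →ₗ[R] B →ₗ[R] B) (hPL : ∀ a b c : B, P (a * b) c = a * P b c + b * P a c)
    {s : Set B} {y : B} (hs : ∀ x ∈ s, P x y = 0) {f : B} (hf : f ∈ Algebra.adjoin R s) :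
    P f y = 0 := by
  let D : Derivation R B B := Derivation.mk' (P.flip y) fun a b => hPL a b y
  exact Derivation.eqOn_adjoin (D1 := D) (D2 := 0) hs hf

theorem stmt8_general {A B : Type*} [Ring A] [Algebra ℂ A] [CommRing B] [Algebra ℂ B]
    (N : ℕ)
    (φ : A →ₐ[ℂ] Matrix (Fin N) (Fin N) B)
    (db : A ⊗[ℂ] A →ₗ[ℂ] A ⊗[ℂ] A)
    (hLeibR : ∀ a b c : A, db (a ⊗ₜ[ℂ] (b * c)) =
      (b ⊗ₜ[ℂ] (1 : A)) * db (a ⊗ₜ[ℂ] c) + db (a ⊗ₜ[ℂ] b) * ((1 : A) ⊗ₜ[ℂ] c))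
    (Φ : Fin N → Fin N → Fin N → Fin N → (A ⊗[ℂ] A →ₗ[ℂ] B))
    (hΦ : ∀ (k j i l : Fin N) (s t : A),
      Φ k j i l (s ⊗ₜ[ℂ] t) = φ s k j * φ t i l)
    (P : B →ₗ[ℂ] B →ₗ[ℂ] B)
    (hPL : ∀ a b c : B, P (a * b) c = a * P b c + b * P a c)
    (hPφ : ∀ (x y : A) (i j k l : Fin N),
      P (φ x i j) (φ y k l) = Φ k j i l (db (x ⊗ₜ[ℂ] y)))
    (T : Subalgebra ℂ B)
    (hT : T = Algebra.adjoin ℂ (Set.range fun x : A => Matrix.trace (φ x))) :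
    (∃ S : Subalgebra ℂ A,
      (S : Set A) = {c : A | ∀ h : A, LinearMap.mul' ℂ A (db (h ⊗ₜ[ℂ] c)) = 0}) ∧
    (∀ c : A, (∀ h : A, LinearMap.mul' ℂ A (db (h ⊗ₜ[ℂ] c)) = 0) →
      ∀ f ∈ T, P f (Matrix.trace (φ c)) = 0) := by
  refine ⟨⟨rightCasimirSubalgebra db hLeibR, rfl⟩, fun c hc f hf => ?_⟩
  subst hT
  refine apply_eq_zero_of_mem_adjoin P hPL (Set.forall_mem_range.2 fun x => ?_) hf
  rw [apply_trace_trace_eq_trace_map_mul' φ db Φ hΦ P hPφ, hc x, map_zero, Matrix.trace_zero]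

/-- The set of right Casimir elements is a unital ℂ-subalgebra of `A`,
and traces of right Casimirs are Casimirs of the restricted bracket on `T`. -/
theorem stmt8 {A B : Type*} [Ring A] [Algebra ℂ A] [CommRing B] [Algebra ℂ B]
    (N : ℕ) (hN : 0 < N)
    (φ : A →ₐ[ℂ] Matrix (Fin N) (Fin N) B)
    (db : A ⊗[ℂ] A →ₗ[ℂ] A ⊗[ℂ] A)
    (hLeibR : ∀ a b c : A, db (a ⊗ₜ[ℂ] (b * c)) =
      (b ⊗ₜ[ℂ] (1 : A)) * db (a ⊗ₜ[ℂ] c) + db (a ⊗ₜ[ℂ] b) * ((1 : A) ⊗ₜ[ℂ] c))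
    (hLeibL : ∀ a b c : A, db ((a * b) ⊗ₜ[ℂ] c) =
      ((1 : A) ⊗ₜ[ℂ] a) * db (b ⊗ₜ[ℂ] c) + db (a ⊗ₜ[ℂ] c) * (b ⊗ₜ[ℂ] (1 : A)))
    (Φ : Fin N → Fin N → Fin N → Fin N → (A ⊗[ℂ] A →ₗ[ℂ] B))
    (hΦ : ∀ (k j i l : Fin N) (s t : A),
      Φ k j i l (s ⊗ₜ[ℂ] t) = φ s k j * φ t i l)
    (P : B →ₗ[ℂ] B →ₗ[ℂ] B)
    (hPL : ∀ a b c : B, P (a * b) c = a * P b c + b * P a c)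
    (hPR : ∀ a b c : B, P a (b * c) = c * P a b + b * P a c)
    (hPφ : ∀ (x y : A) (i j k l : Fin N),
      P (φ x i j) (φ y k l) = Φ k j i l (db (x ⊗ₜ[ℂ] y)))
    (T : Subalgebra ℂ B)
    (hT : T = Algebra.adjoin ℂ (Set.range fun x : A => Matrix.trace (φ x))) :
    (∃ S : Subalgebra ℂ A,
      (S : Set A) = {c : A | ∀ h : A, LinearMap.mul' ℂ A (db (h ⊗ₜ[ℂ] c)) = 0}) ∧
    (∀ c : A, (∀ h : A, LinearMap.mul' ℂ A (db (h ⊗ₜ[ℂ] c)) = 0) →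
      ∀ f ∈ T, P f (Matrix.trace (φ c)) = 0) :=
  stmt8_general N φ db hLeibR Φ hΦ P hPL hPφ T hT
end

section
/- Let δ₁, δ₂ be double derivations on A and define the ℂ-linear map R : A ⊗ A → A ⊗ A by letting R(a ⊗ b) be the image of δ₁(a) ⊗ δ₂(b) ∈ A⊗A⊗A⊗A under the linear map (x ⊗ y) ⊗ (s ⊗ t) ↦ (s·y) ⊗ (x·t) (in Sweedler notation, R(a ⊗ b) = δ₂(b)′·δ₁(a)″ ⊗ δ₁(a)′·δ₂(b)″). Then R is a double bracket on A: for all a,b,c ∈ A, R(ab ⊗ c) = (1 ⊗ a)·R(b ⊗ c) + R(a ⊗ c)·(b ⊗ 1) and R(a ⊗ bc) = (b ⊗ 1)·R(a ⊗ c) + R(a ⊗ b)·(1 ⊗ c), with products taken in the tensor-product algebra A ⊗ A. -/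
open TensorProduct

/-!
Write `Ψ` for the map `(x ⊗ y) ⊗ (s ⊗ t) ↦ s y ⊗ x t`. Multiplying the first argument of `Ψ`
by `a ⊗ 1` on the left (resp. by `1 ⊗ b` on the right) multiplies its value by `1 ⊗ a` on the
left (resp. by `b ⊗ 1` on the right), and multiplying the second argument by `b ⊗ 1` on the left
(resp. `1 ⊗ c` on the right) multiplies the value in the same way. The two Leibniz rules of
`R(a ⊗ b) = Ψ(δ₁ a ⊗ δ₂ b)` are then the Leibniz rules of `δ₁` and `δ₂` pushed through `Ψ`.
-/

namespace TensorProduct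

variable {R A : Type*} [CommSemiring R] [Semiring A] [Algebra R A]
  {Ψ : (A ⊗[R] A) ⊗[R] (A ⊗[R] A) →ₗ[R] A ⊗[R] A}

theorem apply_tmul_one_mul_tmul
    (hΨ : ∀ x y s t : A, Ψ ((x ⊗ₜ y) ⊗ₜ (s ⊗ₜ t)) = (s * y) ⊗ₜ (x * t))
    (a : A) (u v : A ⊗[R] A) :
    Ψ (((a ⊗ₜ 1) * u) ⊗ₜ v) = ((1 : A) ⊗ₜ a) * Ψ (u ⊗ₜ v) := by
  have h : Ψ ∘ₗ map (LinearMap.mulLeft R (a ⊗ₜ (1 : A))) LinearMap.id =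
      LinearMap.mulLeft R ((1 : A) ⊗ₜ a) ∘ₗ Ψ :=
    ext_fourfold' fun x y s t => by simp [hΨ, mul_assoc]
  exact LinearMap.congr_fun h (u ⊗ₜ v)

theorem apply_mul_one_tmul_tmul
    (hΨ : ∀ x y s t : A, Ψ ((x ⊗ₜ y) ⊗ₜ (s ⊗ₜ t)) = (s * y) ⊗ₜ (x * t))
    (b : A) (u v : A ⊗[R] A) :
    Ψ ((u * ((1 : A) ⊗ₜ b)) ⊗ₜ v) = Ψ (u ⊗ₜ v) * (b ⊗ₜ 1) := by
  have h : Ψ ∘ₗ map (LinearMap.mulRight R ((1 : A) ⊗ₜ b)) LinearMap.id =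
      LinearMap.mulRight R (b ⊗ₜ (1 : A)) ∘ₗ Ψ :=
    ext_fourfold' fun x y s t => by simp [hΨ, mul_assoc]
  exact LinearMap.congr_fun h (u ⊗ₜ v)

theorem apply_tmul_tmul_one_mul
    (hΨ : ∀ x y s t : A, Ψ ((x ⊗ₜ y) ⊗ₜ (s ⊗ₜ t)) = (s * y) ⊗ₜ (x * t))
    (b : A) (u v : A ⊗[R] A) :
    Ψ (u ⊗ₜ ((b ⊗ₜ 1) * v)) = (b ⊗ₜ (1 : A)) * Ψ (u ⊗ₜ v) := by
  have h : Ψ ∘ₗ map LinearMap.id (LinearMap.mulLeft R (b ⊗ₜ (1 : A))) =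
      LinearMap.mulLeft R (b ⊗ₜ (1 : A)) ∘ₗ Ψ :=
    ext_fourfold' fun x y s t => by simp [hΨ, mul_assoc]
  exact LinearMap.congr_fun h (u ⊗ₜ v)

theorem apply_tmul_mul_one_tmul
    (hΨ : ∀ x y s t : A, Ψ ((x ⊗ₜ y) ⊗ₜ (s ⊗ₜ t)) = (s * y) ⊗ₜ (x * t))
    (c : A) (u v : A ⊗[R] A) :
    Ψ (u ⊗ₜ (v * ((1 : A) ⊗ₜ c))) = Ψ (u ⊗ₜ v) * ((1 : A) ⊗ₜ c) := by
  have h : Ψ ∘ₗ map LinearMap.id (LinearMap.mulRight R ((1 : A) ⊗ₜ c)) =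
      LinearMap.mulRight R ((1 : A) ⊗ₜ c) ∘ₗ Ψ :=
    ext_fourfold' fun x y s t => by simp [hΨ, mul_assoc]
  exact LinearMap.congr_fun h (u ⊗ₜ v)

end TensorProduct

/-- Given double derivations `δ₁, δ₂` on `A`, the map
`R(a ⊗ b) = δ₂(b)′δ₁(a)″ ⊗ δ₁(a)′δ₂(b)″` is a double bracket on `A`. -/
theorem stmt11 {A : Type*} [Ring A] [Algebra ℂ A]
    (δ₁ δ₂ : A →ₗ[ℂ] A ⊗[ℂ] A)
    (hδ₁ : ∀ a b : A, δ₁ (a * b) =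
      (a ⊗ₜ[ℂ] (1 : A)) * δ₁ b + δ₁ a * ((1 : A) ⊗ₜ[ℂ] b))
    (hδ₂ : ∀ a b : A, δ₂ (a * b) =
      (a ⊗ₜ[ℂ] (1 : A)) * δ₂ b + δ₂ a * ((1 : A) ⊗ₜ[ℂ] b))
    (Ψ : (A ⊗[ℂ] A) ⊗[ℂ] (A ⊗[ℂ] A) →ₗ[ℂ] A ⊗[ℂ] A)
    (hΨ : ∀ x y s t : A,
      Ψ ((x ⊗ₜ[ℂ] y) ⊗ₜ[ℂ] (s ⊗ₜ[ℂ] t)) = (s * y) ⊗ₜ[ℂ] (x * t))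
    (R : A ⊗[ℂ] A →ₗ[ℂ] A ⊗[ℂ] A)
    (hR : ∀ a b : A, R (a ⊗ₜ[ℂ] b) = Ψ (δ₁ a ⊗ₜ[ℂ] δ₂ b)) :
    (∀ a b c : A, R ((a * b) ⊗ₜ[ℂ] c) =
      ((1 : A) ⊗ₜ[ℂ] a) * R (b ⊗ₜ[ℂ] c) + R (a ⊗ₜ[ℂ] c) * (b ⊗ₜ[ℂ] (1 : A))) ∧
    (∀ a b c : A, R (a ⊗ₜ[ℂ] (b * c)) =
      (b ⊗ₜ[ℂ] (1 : A)) * R (a ⊗ₜ[ℂ] c) + R (a ⊗ₜ[ℂ] b) * ((1 : A) ⊗ₜ[ℂ] c)) := by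
  refine ⟨fun a b c => ?_, fun a b c => ?_⟩
  · rw [hR, hδ₁, add_tmul, map_add, apply_tmul_one_mul_tmul hΨ, apply_mul_one_tmul_tmul hΨ,
      hR, hR]
  · rw [hR, hδ₂, tmul_add, map_add, apply_tmul_tmul_one_mul hΨ, apply_tmul_mul_one_tmul hΨ,
      hR, hR]
end

section
/- Let k ≥ 1 and let δ₁,…,δ_k be double derivations on A. Define the ℂ-linear map D : A^{⊗k} → A^{⊗k} whose value on a₁ ⊗ … ⊗ a_k has, as its m-th tensor factor (1 ≤ m ≤ k), the product δ_{k−m+1}(a_{k−m+1})′ · δ_{σ(k−m+1)}(a_{σ(k−m+1)})″, where σ(i) := (i mod k) + 1 and Sweedler notation δ(a) = δ(a)′ ⊗ δ(a)″ is used (so D(a₁ ⊗ … ⊗ a_k) = δ_k(a_k)′δ₁(a₁)″ ⊗ δ_{k−1}(a_{k−1})′δ_k(a_k)″ ⊗ … ⊗ δ₁(a₁)′δ₂(a₂)″). Then D is a k-derivation in the cyclic sense: for each i ∈ {1,…,k} and all a₁,…,a_k, b, c ∈ A, D(a₁ ⊗ … ⊗ bc ⊗ … ⊗ a_k) (with bc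 in position i) equals L_b · D(a₁ ⊗ … ⊗ c ⊗ … ⊗ a_k) + D(a₁ ⊗ … ⊗ b ⊗ … ⊗ a_k) · R_c, where L_b ∈ A^{⊗k} is the elementary tensor with b in position k−i+1 and 1 elsewhere, and R_c ∈ A^{⊗k} is the elementary tensor with c in position ((1−i) mod k) + 1 and 1 elsewhere, products taken in the tensor-product algebra A^{⊗k}. -/
/-!
Write `D = Ψ ∘ ⨂ δᵢ`. The Leibniz rule for `δᵢ` splits `D (… ⊗ bc ⊗ …)` into two terms in which
the `i`-th factor of `⨂ (A ⊗ A)` is multiplied by `b ⊗ 1` on the left, resp. by `1 ⊗ c` on the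
right. Since `Ψ` moves the left half of factor `i` to position `i.rev` and the right half to the
position `m` with `m.rev + 1 = i`, i.e. `m = -i`, these become left multiplication by `L_b` and right
multiplication by `R_c`. Both sides being multilinear, it suffices to check this on pure tensors.
-/

open TensorProduct PiTensorProduct

theorem MultilinearMap.ext_tmul {R ι M N P : Type*} [CommSemiring R] [Finite ι]
    [AddCommMonoid M] [Module R M] [AddCommMonoid N] [Module R N] [AddCommMonoid P] [Module R P]
    {f g : MultilinearMap R (fun _ : ι => M ⊗[R] N) P}
    (h : ∀ (x : ι → M) (y : ι → N), f (fun l => x l ⊗ₜ y l) = g (fun l => x l ⊗ₜ y l)) :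
    f = g := by
  refine MultilinearMap.ext_of_span_eq_top (g := fun _ (p : M × N) => p.1 ⊗ₜ[R] p.2)
    (fun _ => ?_) fun p => h (fun l => (p l).1) (fun l => (p l).2)
  rw [← TensorProduct.span_tmul_eq_top]
  congr 1
  ext t
  simp [eq_comm]

theorem PiTensorProduct.map_tprod_update_of_tmul {R ι M N P : Type*} [CommSemiring R]
    [Finite ι] [DecidableEq ι] [AddCommMonoid M] [Module R M] [AddCommMonoid N] [Module R N]
    [AddCommMonoid P] [Module R P]
    {Φ : (⨂[R] _ : ι, M ⊗[R] N) →ₗ[R] P} {G : P →ₗ[R] P} {i : ι} {F : M ⊗[R] N →ₗ[R] M ⊗[R] N}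
    (h : ∀ (x : ι → M) (y : ι → N),
      Φ (tprod R (Function.update (fun l => x l ⊗ₜ y l) i (F (x i ⊗ₜ y i)))) =
        G (Φ (tprod R fun l => x l ⊗ₜ y l)))
    (z : ι → M ⊗[R] N) (v : M ⊗[R] N) :
    Φ (tprod R (Function.update z i (F v))) = G (Φ (tprod R (Function.update z i v))) := by
  have hF : ∀ w : ι → M ⊗[R] N,
      (fun l => Function.update (fun _ => LinearMap.id) i F l (w l)) =
        Function.update w i (F (w i)) := by
    intro w
    funext l
    rcases eq_or_ne l i with rfl | hl <;> simp [*]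
  have hext : (Φ.compMultilinearMap (tprod R)).compLinearMap
      (Function.update (fun _ => LinearMap.id) i F) =
      G.compMultilinearMap (Φ.compMultilinearMap (tprod R)) :=
    MultilinearMap.ext_tmul fun x y => by simpa [hF] using h x y
  simpa [hF] using congr($hext (Function.update z i v))

section CyclicProduct

variable {R A ι : Type*} [CommSemiring R] [Semiring A] [Algebra R A] [Finite ι] [DecidableEq ι]
  {Ψ : (⨂[R] _ : ι, A ⊗[R] A) →ₗ[R] ⨂[R] _ : ι, A} {σ τ : ι → ι}

theorem map_tprod_update_tmul_one_mul
    (hΨ : ∀ x y : ι → A, Ψ (tprod R fun l => x l ⊗ₜ y l) = tprod R fun m => x (σ m) * y (τ m))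
    {i j : ι} (hσ : ∀ m, σ m = i ↔ m = j) (b : A)
    (z : ι → A ⊗[R] A) (v : A ⊗[R] A) :
    Ψ (tprod R (Function.update z i ((b ⊗ₜ 1) * v))) =
      tprod R (Pi.mulSingle j b : ι → A) * Ψ (tprod R (Function.update z i v)) := by
  refine map_tprod_update_of_tmul (F := LinearMap.mulLeft R (b ⊗ₜ 1))
    (G := LinearMap.mulLeft R (tprod R (Pi.mulSingle j b : ι → A))) (fun x y => ?_) z v
  have hupd : Function.update (fun l => x l ⊗ₜ[R] y l) i ((b * x i) ⊗ₜ y i) =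
      fun l => Function.update x i (b * x i) l ⊗ₜ y l :=
    funext fun l => (Function.apply_update (fun l a => a ⊗ₜ[R] y l) x i _ l).symm
  simp only [LinearMap.mulLeft_apply, Algebra.TensorProduct.tmul_mul_tmul, one_mul, hupd, hΨ,
    tprod_mul_tprod]
  congr 1
  funext m
  rcases eq_or_ne (σ m) i with hm | hm
  · obtain rfl := (hσ m).1 hm
    simp [hm, mul_assoc]
  · simp [hm, (hσ m).not.1 hm]

theorem map_tprod_update_mul_one_tmul
    (hΨ : ∀ x y : ι → A, Ψ (tprod R fun l => x l ⊗ₜ y l) = tprod R fun m => x (σ m) * y (τ m))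
    {i j : ι} (hτ : ∀ m, τ m = i ↔ m = j) (c : A)
    (z : ι → A ⊗[R] A) (v : A ⊗[R] A) :
    Ψ (tprod R (Function.update z i (v * (1 ⊗ₜ c)))) =
      Ψ (tprod R (Function.update z i v)) * tprod R (Pi.mulSingle j c : ι → A) := by
  refine map_tprod_update_of_tmul (F := LinearMap.mulRight R (1 ⊗ₜ c))
    (G := LinearMap.mulRight R (tprod R (Pi.mulSingle j c : ι → A))) (fun x y => ?_) z v
  have hupd : Function.update (fun l => x l ⊗ₜ[R] y l) i (x i ⊗ₜ (y i * c)) =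
      fun l => x l ⊗ₜ Function.update y i (y i * c) l :=
    funext fun l => (Function.apply_update (fun l a => x l ⊗ₜ[R] a) y i _ l).symm
  simp only [LinearMap.mulRight_apply, Algebra.TensorProduct.tmul_mul_tmul, mul_one, hupd, hΨ,
    tprod_mul_tprod]
  congr 1
  funext m
  rcases eq_or_ne (τ m) i with hm | hm
  · obtain rfl := (hτ m).1 hm
    simp [hm, mul_assoc]
  · simp [hm, (hτ m).not.1 hm]

end CyclicProduct

theorem Fin.rev_add_one {k : ℕ} [NeZero k] (m : Fin k) : m.rev + 1 = -m := by
  obtain ⟨n, rfl⟩ := Nat.exists_eq_succ_of_ne_zero (NeZero.ne k)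
  rw [← Fin.last_sub, sub_add_eq_add_sub, Fin.last_add_one, zero_sub]

/-- The composite of double derivations arranged cyclically is a
`k`-derivation in the cyclic sense on the `k`-fold tensor power of `A`. -/
theorem stmt12 {A : Type*} [Ring A] [Algebra ℂ A] (k : ℕ) [NeZero k]
    (δ : Fin k → (A →ₗ[ℂ] A ⊗[ℂ] A))
    (hδ : ∀ (i : Fin k) (a b : A), δ i (a * b) =
      (a ⊗ₜ[ℂ] (1 : A)) * δ i b + δ i a * ((1 : A) ⊗ₜ[ℂ] b))
    (Ψ : (⨂[ℂ] _ : Fin k, (A ⊗[ℂ] A)) →ₗ[ℂ] ⨂[ℂ] _ : Fin k, A)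
    (hΨ : ∀ x y : Fin k → A,
      Ψ (PiTensorProduct.tprod ℂ (fun i => x i ⊗ₜ[ℂ] y i)) =
        PiTensorProduct.tprod ℂ (fun m => x m.rev * y (m.rev + 1)))
    (D : (⨂[ℂ] _ : Fin k, A) →ₗ[ℂ] ⨂[ℂ] _ : Fin k, A)
    (hD : ∀ a : Fin k → A,
      D (PiTensorProduct.tprod ℂ a) = Ψ (PiTensorProduct.tprod ℂ (fun i => δ i (a i)))) :
    ∀ (i : Fin k) (a : Fin k → A) (b c : A),
      D (PiTensorProduct.tprod ℂ (Function.update a i (b * c))) =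
        (PiTensorProduct.tprod ℂ (fun m => if m = i.rev then b else (1 : A))) *
          D (PiTensorProduct.tprod ℂ (Function.update a i c)) +
        D (PiTensorProduct.tprod ℂ (Function.update a i b)) *
          (PiTensorProduct.tprod ℂ (fun m => if m = -i then c else (1 : A))) := by
  intro i a b c
  have hL (m : Fin k) : m.rev = i ↔ m = i.rev := Fin.rev_eq_iff
  have hR (m : Fin k) : m.rev + 1 = i ↔ m = -i := by rw [Fin.rev_add_one, neg_eq_iff_eq_neg]
  have hDupdate (x : A) : D (tprod ℂ (Function.update a i x)) =
      Ψ (tprod ℂ (Function.update (fun j => δ j (a j)) i (δ i x))) := by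
    rw [hD]
    congr 2
    funext j
    exact Function.apply_update (fun j => δ j) a i x j
  rw [hDupdate, hδ, MultilinearMap.map_update_add, map_add,
    map_tprod_update_tmul_one_mul (σ := Fin.rev) (τ := fun m => m.rev + 1) hΨ hL,
    map_tprod_update_mul_one_tmul (σ := Fin.rev) (τ := fun m => m.rev + 1) hΨ hR,
    hDupdate, hDupdate]
  simp only [← Pi.mulSingle_apply]
end

section
/- Let A = ℂ⟨u,v⟩ be the free associative ℂ-algebra on two generators u,v, and let δ₁, δ₂, δ̃₁, δ̃₂ be the (unique) double derivations on A with δ₁(u) = 1 ⊗ u, δ₁(v) = 1 ⊗ v, δ₂(u) = u ⊗ 1, δ₂(v) = 0, δ̃₁(u) = u ⊗ 1, δ̃₁(v) = v ⊗ 1, δ̃₂(u) = 1 ⊗ u, δ̃₂(v) = 0. Define R : A ⊗ A → A ⊗ A by R(a ⊗ b) = δ₂(b)′δ₁(a)″ ⊗ δ₁(a)′δ₂(b)″ − δ̃₁(b)′δ̃₂(a)″ ⊗ δ̃₂(a)′δ̃₁(b)″ (Sweedler notation; i.e. R(a ⊗ b) is the image of δ₁(a) ⊗ δ₂(b) under (x⊗y)⊗(s⊗t)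 ↦ sy ⊗ xt, minus the image of δ̃₂(a) ⊗ δ̃₁(b) under the same map). Then R is a double bracket on A and R(u ⊗ v) = −(vu) ⊗ 1, R(v ⊗ u) = (uv) ⊗ 1, R(u ⊗ u) = 0, R(v ⊗ v) = 0; consequently R coincides with the unique double bracket db_K on A having these values on pairs of generators. -/
/-!
Each of the four double derivations satisfies a one-sided Leibniz rule, and the contraction
`(x ⊗ y) ⊗ (s ⊗ t) ↦ s y ⊗ x t` turns left/right multiplication of `δ b` by `b ⊗ 1`, `1 ⊗ c` into
the inner/outer multiplications required of a double bracket; so `R` satisfies both double Leibniz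
rules. A double bracket on a free algebra is determined by its values on pairs of generators:
the difference of two brackets with the same values satisfies the Leibniz rules and vanishes on
generators, hence (by induction on the free algebra, first in the left and then in the right
argument) everywhere.
-/

open TensorProduct

noncomputable section

/-- The free associative ℂ-algebra on two generators. -/
abbrev FreeA2 : Type := FreeAlgebra ℂ (Fin 2)

/-- The generator `u`. -/
def genU : FreeA2 := FreeAlgebra.ι ℂ 0

/-- The generator `v`. -/
def genV : FreeA2 := FreeAlgebra.ι ℂ 1

/-- `db` is a double bracket: it satisfies the double Leibniz rules. -/
def IsDoubleBracket (db : FreeA2 ⊗[ℂ] FreeA2 →ₗ[ℂ] FreeA2 ⊗[ℂ] FreeA2) : Prop :=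
  (∀ a b c : FreeA2, db (a ⊗ₜ[ℂ] (b * c)) =
    (b ⊗ₜ[ℂ] (1 : FreeA2)) * db (a ⊗ₜ[ℂ] c) + db (a ⊗ₜ[ℂ] b) * ((1 : FreeA2) ⊗ₜ[ℂ] c)) ∧
  (∀ a b c : FreeA2, db ((a * b) ⊗ₜ[ℂ] c) =
    ((1 : FreeA2) ⊗ₜ[ℂ] a) * db (b ⊗ₜ[ℂ] c) + db (a ⊗ₜ[ℂ] c) * (b ⊗ₜ[ℂ] (1 : FreeA2)))

/-- The prescribed values of `db_K` on pairs of generators. -/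
def KontsevichGenVals (db : FreeA2 ⊗[ℂ] FreeA2 →ₗ[ℂ] FreeA2 ⊗[ℂ] FreeA2) : Prop :=
  db (genU ⊗ₜ[ℂ] genV) = -((genV * genU) ⊗ₜ[ℂ] (1 : FreeA2)) ∧
  db (genV ⊗ₜ[ℂ] genU) = (genU * genV) ⊗ₜ[ℂ] (1 : FreeA2) ∧
  db (genU ⊗ₜ[ℂ] genU) = 0 ∧
  db (genV ⊗ₜ[ℂ] genV) = 0

section DoubleBracket

variable {k A : Type*} [CommRing k] [Ring A] [Algebra k A]

def IsDoubleDerivation (δ : A →ₗ[k] A ⊗[k] A) : Prop :=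
  ∀ a b : A, δ (a * b) = (a ⊗ₜ[k] (1 : A)) * δ b + δ a * ((1 : A) ⊗ₜ[k] b)

def IsDoubleLeibniz (db : A ⊗[k] A →ₗ[k] A ⊗[k] A) : Prop :=
  (∀ a b c : A, db (a ⊗ₜ[k] (b * c)) =
    (b ⊗ₜ[k] (1 : A)) * db (a ⊗ₜ[k] c) + db (a ⊗ₜ[k] b) * ((1 : A) ⊗ₜ[k] c)) ∧
  (∀ a b c : A, db ((a * b) ⊗ₜ[k] c) =
    ((1 : A) ⊗ₜ[k] a) * db (b ⊗ₜ[k] c) + db (a ⊗ₜ[k] c) * (b ⊗ₜ[k] (1 : A)))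

/-- In Sweedler notation, `δ a ⊗ δ' b ↦ δ' b′ δ a″ ⊗ δ a′ δ' b″`. -/
abbrev IsStarContraction (Ψ : (A ⊗[k] A) ⊗[k] (A ⊗[k] A) →ₗ[k] A ⊗[k] A) : Prop :=
  ∀ x y s t : A, Ψ ((x ⊗ₜ[k] y) ⊗ₜ[k] (s ⊗ₜ[k] t)) = (s * y) ⊗ₜ[k] (x * t)

namespace IsStarContraction

variable {Ψ : (A ⊗[k] A) ⊗[k] (A ⊗[k] A) →ₗ[k] A ⊗[k] A} (hΨ : IsStarContraction Ψ)
include hΨ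

theorem map_tmul_tmul_one_mul (b : A) (ω μ : A ⊗[k] A) :
    Ψ (ω ⊗ₜ[k] ((b ⊗ₜ[k] (1 : A)) * μ)) = (b ⊗ₜ[k] (1 : A)) * Ψ (ω ⊗ₜ[k] μ) := by
  have h : Ψ ∘ₗ (LinearMap.mulLeft k (b ⊗ₜ[k] (1 : A))).lTensor (A ⊗[k] A) =
      LinearMap.mulLeft k (b ⊗ₜ[k] (1 : A)) ∘ₗ Ψ :=
    ext_fourfold' fun x y s t => by simp [hΨ, mul_assoc]
  exact LinearMap.congr_fun h (ω ⊗ₜ μ)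

theorem map_tmul_mul_one_tmul (c : A) (ω μ : A ⊗[k] A) :
    Ψ (ω ⊗ₜ[k] (μ * ((1 : A) ⊗ₜ[k] c))) = Ψ (ω ⊗ₜ[k] μ) * ((1 : A) ⊗ₜ[k] c) := by
  have h : Ψ ∘ₗ (LinearMap.mulRight k ((1 : A) ⊗ₜ[k] c)).lTensor (A ⊗[k] A) =
      LinearMap.mulRight k ((1 : A) ⊗ₜ[k] c) ∘ₗ Ψ :=
    ext_fourfold' fun x y s t => by simp [hΨ, mul_assoc]
  exact LinearMap.congr_fun h (ω ⊗ₜ μ)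

theorem map_tmul_one_mul_tmul (a : A) (ω μ : A ⊗[k] A) :
    Ψ (((a ⊗ₜ[k] (1 : A)) * ω) ⊗ₜ[k] μ) = ((1 : A) ⊗ₜ[k] a) * Ψ (ω ⊗ₜ[k] μ) := by
  have h : Ψ ∘ₗ (LinearMap.mulLeft k (a ⊗ₜ[k] (1 : A))).rTensor (A ⊗[k] A) =
      LinearMap.mulLeft k ((1 : A) ⊗ₜ[k] a) ∘ₗ Ψ :=
    ext_fourfold' fun x y s t => by simp [hΨ, mul_assoc]
  exact LinearMap.congr_fun h (ω ⊗ₜ μ)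

theorem map_mul_one_tmul_tmul (b : A) (ω μ : A ⊗[k] A) :
    Ψ ((ω * ((1 : A) ⊗ₜ[k] b)) ⊗ₜ[k] μ) = Ψ (ω ⊗ₜ[k] μ) * (b ⊗ₜ[k] (1 : A)) := by
  have h : Ψ ∘ₗ (LinearMap.mulRight k ((1 : A) ⊗ₜ[k] b)).rTensor (A ⊗[k] A) =
      LinearMap.mulRight k (b ⊗ₜ[k] (1 : A)) ∘ₗ Ψ :=
    ext_fourfold' fun x y s t => by simp [hΨ, mul_assoc]
  exact LinearMap.congr_fun h (ω ⊗ₜ μ)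

theorem map_tmul_derivation_mul {δ : A →ₗ[k] A ⊗[k] A} (hδ : IsDoubleDerivation δ)
    (ω : A ⊗[k] A) (b c : A) :
    Ψ (ω ⊗ₜ[k] δ (b * c)) =
      (b ⊗ₜ[k] (1 : A)) * Ψ (ω ⊗ₜ[k] δ c) + Ψ (ω ⊗ₜ[k] δ b) * ((1 : A) ⊗ₜ[k] c) := by
  rw [hδ, tmul_add, map_add, hΨ.map_tmul_tmul_one_mul, hΨ.map_tmul_mul_one_tmul]

theorem map_derivation_mul_tmul {δ : A →ₗ[k] A ⊗[k] A} (hδ : IsDoubleDerivation δ)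
    (a b : A) (μ : A ⊗[k] A) :
    Ψ (δ (a * b) ⊗ₜ[k] μ) =
      ((1 : A) ⊗ₜ[k] a) * Ψ (δ b ⊗ₜ[k] μ) + Ψ (δ a ⊗ₜ[k] μ) * (b ⊗ₜ[k] (1 : A)) := by
  rw [hδ, add_tmul, map_add, hΨ.map_tmul_one_mul_tmul, hΨ.map_mul_one_tmul_tmul]

theorem isDoubleLeibniz_of_isDoubleDerivation {δ₁ δ₂ δ₁' δ₂' : A →ₗ[k] A ⊗[k] A}
    (hδ₁ : IsDoubleDerivation δ₁) (hδ₂ : IsDoubleDerivation δ₂)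
    (hδ₁' : IsDoubleDerivation δ₁') (hδ₂' : IsDoubleDerivation δ₂')
    {R : A ⊗[k] A →ₗ[k] A ⊗[k] A}
    (hR : ∀ a b : A, R (a ⊗ₜ[k] b) = Ψ (δ₁ a ⊗ₜ[k] δ₂ b) - Ψ (δ₂' a ⊗ₜ[k] δ₁' b)) :
    IsDoubleLeibniz R := by
  constructor
  · intro a b c
    rw [hR, hR, hR, hΨ.map_tmul_derivation_mul hδ₂, hΨ.map_tmul_derivation_mul hδ₁']
    noncomm_ring
  · intro a b c
    rw [hR, hR, hR, hΨ.map_derivation_mul_tmul hδ₁, hΨ.map_derivation_mul_tmul hδ₂']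
    noncomm_ring

end IsStarContraction

namespace IsDoubleLeibniz

theorem sub {D₁ D₂ : A ⊗[k] A →ₗ[k] A ⊗[k] A} (h₁ : IsDoubleLeibniz D₁)
    (h₂ : IsDoubleLeibniz D₂) : IsDoubleLeibniz (D₁ - D₂) := by
  constructor
  · intro a b c
    simp only [LinearMap.sub_apply, h₁.1, h₂.1]
    noncomm_ring
  · intro a b c
    simp only [LinearMap.sub_apply, h₁.2, h₂.2]
    noncomm_ring

variable {D : A ⊗[k] A →ₗ[k] A ⊗[k] A} (hD : IsDoubleLeibniz D)
include hD

theorem apply_one_tmul (c : A) : D ((1 : A) ⊗ₜ[k] c) = 0 := by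
  have h := hD.2 1 1 c
  rw [one_mul, ← Algebra.TensorProduct.one_def, one_mul, mul_one] at h
  exact left_eq_add.mp h

theorem apply_tmul_one (a : A) : D (a ⊗ₜ[k] (1 : A)) = 0 := by
  have h := hD.1 a 1 1
  rw [one_mul, ← Algebra.TensorProduct.one_def, one_mul, mul_one] at h
  exact left_eq_add.mp h

end IsDoubleLeibniz

end DoubleBracket

namespace IsDoubleLeibniz

variable {k X : Type*} [CommRing k] {D : FreeAlgebra k X ⊗[k] FreeAlgebra k X →ₗ[k]
  FreeAlgebra k X ⊗[k] FreeAlgebra k X} (hD : IsDoubleLeibniz D)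
include hD

theorem apply_tmul_ι_eq_zero (h : ∀ i j, D (FreeAlgebra.ι k i ⊗ₜ[k] FreeAlgebra.ι k j) = 0)
    (a : FreeAlgebra k X) (j : X) : D (a ⊗ₜ[k] FreeAlgebra.ι k j) = 0 := by
  induction a using FreeAlgebra.induction with
  | grade0 r =>
    rw [Algebra.algebraMap_eq_smul_one, ← smul_tmul', map_smul, hD.apply_one_tmul, smul_zero]
  | grade1 i => exact h i j
  | mul a b ha hb => rw [hD.2, ha, hb, mul_zero, zero_mul, add_zero]
  | add a b ha hb => rw [add_tmul, map_add, ha, hb, add_zero]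

theorem eq_zero_of_apply_ι_tmul_ι
    (h : ∀ i j, D (FreeAlgebra.ι k i ⊗ₜ[k] FreeAlgebra.ι k j) = 0) : D = 0 := by
  refine ext' fun a b => ?_
  rw [LinearMap.zero_apply]
  induction b using FreeAlgebra.induction with
  | grade0 r =>
    rw [Algebra.algebraMap_eq_smul_one, tmul_smul, map_smul, hD.apply_tmul_one, smul_zero]
  | grade1 j => exact hD.apply_tmul_ι_eq_zero h a j
  | mul b c hb hc => rw [hD.1, hb, hc, mul_zero, zero_mul, add_zero]
  | add b c hb hc => rw [tmul_add, map_add, hb, hc, add_zero]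

end IsDoubleLeibniz

theorem IsDoubleLeibniz.ext_of_apply_ι_tmul_ι {k X : Type*} [CommRing k]
    {D₁ D₂ : FreeAlgebra k X ⊗[k] FreeAlgebra k X →ₗ[k] FreeAlgebra k X ⊗[k] FreeAlgebra k X}
    (h₁ : IsDoubleLeibniz D₁) (h₂ : IsDoubleLeibniz D₂)
    (h : ∀ i j, D₁ (FreeAlgebra.ι k i ⊗ₜ[k] FreeAlgebra.ι k j) =
      D₂ (FreeAlgebra.ι k i ⊗ₜ[k] FreeAlgebra.ι k j)) :
    D₁ = D₂ :=
  sub_eq_zero.mp <| (h₁.sub h₂).eq_zero_of_apply_ι_tmul_ι fun i j => by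
    rw [LinearMap.sub_apply, h i j, sub_self]

theorem KontsevichGenVals.apply_ι_tmul_ι_eq
    {db₁ db₂ : FreeA2 ⊗[ℂ] FreeA2 →ₗ[ℂ] FreeA2 ⊗[ℂ] FreeA2}
    (h₁ : KontsevichGenVals db₁) (h₂ : KontsevichGenVals db₂) (i j : Fin 2) :
    db₁ (FreeAlgebra.ι ℂ i ⊗ₜ[ℂ] FreeAlgebra.ι ℂ j) =
      db₂ (FreeAlgebra.ι ℂ i ⊗ₜ[ℂ] FreeAlgebra.ι ℂ j) := by
  obtain ⟨uv₁, vu₁, uu₁, vv₁⟩ := h₁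
  obtain ⟨uv₂, vu₂, uu₂, vv₂⟩ := h₂
  fin_cases i <;> fin_cases j
  exacts [uu₁.trans uu₂.symm, uv₁.trans uv₂.symm, vu₁.trans vu₂.symm, vv₁.trans vv₂.symm]

/-- The bivector `δ₁ ⋆ δ₂ − δ̃₂ ⋆ δ̃₁` built from the four indicated
double derivations induces a double bracket on `ℂ⟨u,v⟩` which coincides with the
unique double bracket `db_K` with the Kontsevich values on generators. -/
theorem stmt13
    (δ₁ δ₂ tδ₁ tδ₂ : FreeA2 →ₗ[ℂ] FreeA2 ⊗[ℂ] FreeA2)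
    (hδ₁ : ∀ a b : FreeA2, δ₁ (a * b) =
      (a ⊗ₜ[ℂ] (1 : FreeA2)) * δ₁ b + δ₁ a * ((1 : FreeA2) ⊗ₜ[ℂ] b))
    (hδ₂ : ∀ a b : FreeA2, δ₂ (a * b) =
      (a ⊗ₜ[ℂ] (1 : FreeA2)) * δ₂ b + δ₂ a * ((1 : FreeA2) ⊗ₜ[ℂ] b))
    (htδ₁ : ∀ a b : FreeA2, tδ₁ (a * b) =
      (a ⊗ₜ[ℂ] (1 : FreeA2)) * tδ₁ b + tδ₁ a * ((1 : FreeA2) ⊗ₜ[ℂ] b))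
    (htδ₂ : ∀ a b : FreeA2, tδ₂ (a * b) =
      (a ⊗ₜ[ℂ] (1 : FreeA2)) * tδ₂ b + tδ₂ a * ((1 : FreeA2) ⊗ₜ[ℂ] b))
    (hδ₁u : δ₁ genU = (1 : FreeA2) ⊗ₜ[ℂ] genU) (hδ₁v : δ₁ genV = (1 : FreeA2) ⊗ₜ[ℂ] genV)
    (hδ₂u : δ₂ genU = genU ⊗ₜ[ℂ] (1 : FreeA2)) (hδ₂v : δ₂ genV = 0)
    (htδ₁u : tδ₁ genU = genU ⊗ₜ[ℂ] (1 : FreeA2)) (htδ₁v : tδ₁ genV = genV ⊗ₜ[ℂ] (1 : FreeA2))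
    (htδ₂u : tδ₂ genU = (1 : FreeA2) ⊗ₜ[ℂ] genU) (htδ₂v : tδ₂ genV = 0)
    (Ψ : (FreeA2 ⊗[ℂ] FreeA2) ⊗[ℂ] (FreeA2 ⊗[ℂ] FreeA2) →ₗ[ℂ] FreeA2 ⊗[ℂ] FreeA2)
    (hΨ : ∀ x y s t : FreeA2,
      Ψ ((x ⊗ₜ[ℂ] y) ⊗ₜ[ℂ] (s ⊗ₜ[ℂ] t)) = (s * y) ⊗ₜ[ℂ] (x * t))
    (R : FreeA2 ⊗[ℂ] FreeA2 →ₗ[ℂ] FreeA2 ⊗[ℂ] FreeA2)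
    (hR : ∀ a b : FreeA2,
      R (a ⊗ₜ[ℂ] b) = Ψ (δ₁ a ⊗ₜ[ℂ] δ₂ b) - Ψ (tδ₂ a ⊗ₜ[ℂ] tδ₁ b)) :
    IsDoubleBracket R ∧ KontsevichGenVals R ∧
    (∀ db : FreeA2 ⊗[ℂ] FreeA2 →ₗ[ℂ] FreeA2 ⊗[ℂ] FreeA2,
      IsDoubleBracket db ∧ KontsevichGenVals db → db = R) := by
  have hRleib : IsDoubleLeibniz R :=
    IsStarContraction.isDoubleLeibniz_of_isDoubleDerivation hΨ hδ₁ hδ₂ htδ₁ htδ₂ hR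
  have hRvals : KontsevichGenVals R := by
    refine ⟨?_, ?_, ?_, ?_⟩ <;>
      simp [hR, hδ₁u, hδ₁v, hδ₂u, hδ₂v, htδ₁u, htδ₁v, htδ₂u, htδ₂v, hΨ]
  refine ⟨hRleib, hRvals, fun db ⟨hdb, hdbvals⟩ => ?_⟩
  exact IsDoubleLeibniz.ext_of_apply_ι_tmul_ι hdb hRleib (hdbvals.apply_ι_tmul_ι_eq hRvals)

end
end

section
/- Let M be a coassociative counital ℂ-coalgebra with comultiplication Δ, let ν : M × M → ℂ be ℂ-bilinear, and define the ℂ-linear map ν̄ : M ⊗ M → M ⊗ M by letting ν̄(α ⊗ β) be the image of α ⊗ (Δ ⊗ id)(Δ(β)) under α ⊗ β¹ ⊗ β² ⊗ β³ ↦ ν(α, β²)·(β¹ ⊗ β³). Assume ν̄ is symmetric: ν̄(α ⊗ β) = ν̄(β ⊗ α) for all α, β ∈ M. Then the following identities of linear maps M ⊗ M → M ⊗ M ⊗ M hold: (id_M ⊗ Δ) ∘ ν̄ = (ν̄ ⊗ id_M) ∘ (id_M ⊗ Δ), and (Δ ⊗ id_M) ∘ ν̄ = (id_M ⊗ ν̄)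 ∘ τ₁₂ ∘ (id_M ⊗ Δ), where τ₁₂ : M ⊗ M ⊗ M → M ⊗ M ⊗ M swaps the first two tensor factors. (In Sweedler notation, writing ν̄(α ⊗ β) = α_β ⊗ β^α: α_β ⊗ (β^α)¹ ⊗ (β^α)² = α_{β¹} ⊗ (β¹)^α ⊗ β² and (α_β)¹ ⊗ (α_β)² ⊗ β^α = β¹ ⊗ α_{β²} ⊗ (β²)^α.) -/
/-!
Contracting one leg of `Δ` against `ν α` gives the maps `b ↦ ν(α, b²) b¹` and
`b ↦ ν(α, b¹) b²`; by coassociativity, `ν̄(α ⊗ β)` is the image of `Δβ` under the first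
map applied to the left factor, and also under the second map applied to the right factor.
Applying `Δ` to the other factor commutes with the contraction, and one more use of
coassociativity turns the result into the right-hand side of the corresponding identity.
-/

open TensorProduct LinearMap

section TensorAlgebra

variable {R M N P Q : Type*} [CommSemiring R] [AddCommMonoid M] [AddCommMonoid N]
  [AddCommMonoid P] [AddCommMonoid Q] [Module R M] [Module R N] [Module R P] [Module R Q]

theorem TensorProduct.ext_of_comp_mk {f g : M ⊗[R] N →ₗ[R] P}
    (h : ∀ m, f ∘ₗ mk R M N m = g ∘ₗ mk R M N m) : f = g :=
  TensorProduct.ext (LinearMap.ext h)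

theorem TensorProduct.assoc_symm_comp_mk (m : M) :
    (TensorProduct.assoc R M N P).symm.toLinearMap ∘ₗ mk R M (N ⊗[R] P) m =
      rTensor P (mk R M N m) :=
  TensorProduct.ext' fun _ _ => rfl

theorem TensorProduct.leftComm_comp_mk (m : M) :
    (TensorProduct.leftComm R M N P).toLinearMap ∘ₗ mk R M (N ⊗[R] P) m =
      lTensor N (mk R M P m) :=
  TensorProduct.ext' fun _ _ => rfl

theorem LinearMap.rTensor_tensor_comp_assoc (g : M →ₗ[R] Q) :
    rTensor (N ⊗[R] P) g ∘ₗ (TensorProduct.assoc R M N P).toLinearMap =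
      (TensorProduct.assoc R Q N P).toLinearMap ∘ₗ rTensor P (rTensor N g) :=
  TensorProduct.ext_threefold fun _ _ _ => rfl

theorem LinearMap.lTensor_lTensor_comp_assoc (f : P →ₗ[R] Q) :
    lTensor M (lTensor N f) ∘ₗ (TensorProduct.assoc R M N P).toLinearMap =
      (TensorProduct.assoc R M N Q).toLinearMap ∘ₗ lTensor (M ⊗[R] N) f :=
  TensorProduct.ext_threefold fun _ _ _ => rfl

theorem LinearMap.rTensor_rid_comp_lTensor_comp_assoc_symm (f : N →ₗ[R] R) :
    rTensor P ((TensorProduct.rid R M).toLinearMap ∘ₗ lTensor M f) ∘ₗ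
        (TensorProduct.assoc R M N P).symm.toLinearMap =
      lTensor M ((TensorProduct.lid R P).toLinearMap ∘ₗ rTensor P f) :=
  TensorProduct.ext_threefold' fun _ _ _ => by simp [smul_tmul]

end TensorAlgebra

section ComulPairing

open Coalgebra (comul coassoc coassoc_symm)

variable {R M : Type*} [CommSemiring R] [AddCommMonoid M] [Module R M] [Coalgebra R M]

-- `b ↦ f(b²) • b¹`
noncomputable def comulContractRight (f : M →ₗ[R] R) : M →ₗ[R] M :=
  (TensorProduct.rid R M).toLinearMap ∘ₗ lTensor M f ∘ₗ comul

-- `b ↦ f(b¹) • b²`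
noncomputable def comulContractLeft (f : M →ₗ[R] R) : M →ₗ[R] M :=
  (TensorProduct.lid R M).toLinearMap ∘ₗ rTensor M f ∘ₗ comul

theorem rTensor_comulContractRight_comp_comul (f : M →ₗ[R] R) :
    rTensor M (comulContractRight f) ∘ₗ comul =
      lTensor M (comulContractLeft f) ∘ₗ comul := by
  calc rTensor M (comulContractRight f) ∘ₗ comul
      = rTensor M ((TensorProduct.rid R M).toLinearMap ∘ₗ lTensor M f) ∘ₗ
          (TensorProduct.assoc R M M M).symm.toLinearMap ∘ₗ lTensor M comul ∘ₗ comul := by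
        rw [coassoc_symm]
        simp only [comulContractRight, rTensor_comp, comp_assoc]
    _ = lTensor M (comulContractLeft f) ∘ₗ comul := by
        rw [← comp_assoc, rTensor_rid_comp_lTensor_comp_assoc_symm, ← comp_assoc,
          ← lTensor_comp, comulContractLeft, comp_assoc]

-- The paper's `ν̄ : α ⊗ β ↦ ν(α, β²) β¹ ⊗ β³`.
noncomputable def comulPairing (ν : M →ₗ[R] M →ₗ[R] R) : M ⊗[R] M →ₗ[R] M ⊗[R] M :=
  TensorProduct.lift <| LinearMap.mk₂ R
    (fun α β => rTensor M (comulContractRight (ν α)) (comul β))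
    (fun _ _ _ => by simp [comulContractRight, lTensor_add, rTensor_add, add_comp, comp_add])
    (fun _ _ _ => by simp [comulContractRight, lTensor_smul, rTensor_smul, smul_comp, comp_smul])
    (fun _ _ _ => by simp)
    (fun _ _ _ => by simp)

theorem comulPairing_comp_mk (ν : M →ₗ[R] M →ₗ[R] R) (α : M) :
    comulPairing ν ∘ₗ mk R M M α = rTensor M (comulContractRight (ν α)) ∘ₗ comul :=
  rfl

theorem comulPairing_comp_mk_eq_lTensor (ν : M →ₗ[R] M →ₗ[R] R) (α : M) :
    comulPairing ν ∘ₗ mk R M M α = lTensor M (comulContractLeft (ν α)) ∘ₗ comul :=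
  rTensor_comulContractRight_comp_comul (ν α)

theorem eq_comulPairing {ν : M →ₗ[R] M →ₗ[R] R}
    {G : M ⊗[R] ((M ⊗[R] M) ⊗[R] M) →ₗ[R] M ⊗[R] M}
    (hG : ∀ a b₁ b₂ b₃ : M,
      G (a ⊗ₜ[R] ((b₁ ⊗ₜ[R] b₂) ⊗ₜ[R] b₃)) = ν a b₂ • (b₁ ⊗ₜ[R] b₃))
    {nubar : M ⊗[R] M →ₗ[R] M ⊗[R] M}
    (hnubar : ∀ α β : M,
      nubar (α ⊗ₜ[R] β) = G (α ⊗ₜ[R] rTensor M comul (comul β))) :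
    nubar = comulPairing ν := by
  refine TensorProduct.ext_of_comp_mk fun α => LinearMap.ext fun β => ?_
  have hGα : G ∘ₗ mk R M _ α =
      rTensor M ((TensorProduct.rid R M).toLinearMap ∘ₗ lTensor M (ν α)) :=
    TensorProduct.ext_threefold fun _ _ _ => by simp [hG, smul_tmul']
  calc nubar (α ⊗ₜ[R] β) = (G ∘ₗ mk R M _ α) (rTensor M comul (comul β)) := hnubar α β
    _ = (comulPairing ν ∘ₗ mk R M M α) β := by
        simp only [hGα, comulPairing_comp_mk, comulContractRight, rTensor_comp, comp_apply]

theorem lTensor_comul_comp_comulPairing (ν : M →ₗ[R] M →ₗ[R] R) :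
    lTensor M comul ∘ₗ comulPairing ν =
      (TensorProduct.assoc R M M M).toLinearMap ∘ₗ rTensor M (comulPairing ν) ∘ₗ
        (TensorProduct.assoc R M M M).symm.toLinearMap ∘ₗ lTensor M comul := by
  refine TensorProduct.ext_of_comp_mk fun α => ?_
  calc (lTensor M comul ∘ₗ comulPairing ν) ∘ₗ mk R M M α
      = rTensor (M ⊗[R] M) (comulContractRight (ν α)) ∘ₗ lTensor M comul ∘ₗ comul := by
        rw [comp_assoc, comulPairing_comp_mk, ← comp_assoc, lTensor_comp_rTensor,
          ← rTensor_comp_lTensor, comp_assoc]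
    _ = (TensorProduct.assoc R M M M).toLinearMap ∘ₗ
          rTensor M (rTensor M (comulContractRight (ν α)) ∘ₗ comul) ∘ₗ comul := by
        rw [← coassoc, ← comp_assoc, rTensor_tensor_comp_assoc, rTensor_comp]
        simp only [comp_assoc]
    _ = _ := by
        rw [← comulPairing_comp_mk, rTensor_comp, ← TensorProduct.assoc_symm_comp_mk]
        simp only [comp_assoc, lTensor_comp_mk]

theorem assoc_comp_rTensor_comul_comp_comulPairing (ν : M →ₗ[R] M →ₗ[R] R) :
    (TensorProduct.assoc R M M M).toLinearMap ∘ₗ rTensor M comul ∘ₗ comulPairing ν =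
      lTensor M (comulPairing ν) ∘ₗ (TensorProduct.leftComm R M M M).toLinearMap ∘ₗ
        lTensor M comul := by
  refine TensorProduct.ext_of_comp_mk fun α => ?_
  calc ((TensorProduct.assoc R M M M).toLinearMap ∘ₗ rTensor M comul ∘ₗ
          comulPairing ν) ∘ₗ mk R M M α
      = lTensor M (lTensor M (comulContractLeft (ν α))) ∘ₗ
          (TensorProduct.assoc R M M M).toLinearMap ∘ₗ rTensor M comul ∘ₗ comul := by
        rw [comp_assoc, comp_assoc, comulPairing_comp_mk_eq_lTensor,
          ← comp_assoc comul (lTensor M _) (rTensor M comul), rTensor_comp_lTensor,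
          ← lTensor_comp_rTensor, comp_assoc,
          ← comp_assoc _ _ (TensorProduct.assoc R M M M).toLinearMap,
          ← lTensor_lTensor_comp_assoc, comp_assoc]
    _ = lTensor M (lTensor M (comulContractLeft (ν α)) ∘ₗ comul) ∘ₗ comul := by
        rw [coassoc, lTensor_comp, comp_assoc]
    _ = _ := by
        rw [← comulPairing_comp_mk_eq_lTensor, lTensor_comp, ← TensorProduct.leftComm_comp_mk]
        simp only [comp_assoc, lTensor_comp_mk]

end ComulPairing

theorem stmt15_general {M : Type*} [AddCommGroup M] [Module ℂ M] [Coalgebra ℂ M]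
    (ν : M →ₗ[ℂ] M →ₗ[ℂ] ℂ)
    (G : M ⊗[ℂ] ((M ⊗[ℂ] M) ⊗[ℂ] M) →ₗ[ℂ] M ⊗[ℂ] M)
    (hG : ∀ a b1 b2 b3 : M,
      G (a ⊗ₜ[ℂ] ((b1 ⊗ₜ[ℂ] b2) ⊗ₜ[ℂ] b3)) = ν a b2 • (b1 ⊗ₜ[ℂ] b3))
    (nubar : M ⊗[ℂ] M →ₗ[ℂ] M ⊗[ℂ] M)
    (hnubar : ∀ α β : M, nubar (α ⊗ₜ[ℂ] β) =
      G (α ⊗ₜ[ℂ] (LinearMap.rTensor M (Coalgebra.comul (R := ℂ))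
        (Coalgebra.comul (R := ℂ) β))))
    (t12 : M ⊗[ℂ] (M ⊗[ℂ] M) →ₗ[ℂ] M ⊗[ℂ] (M ⊗[ℂ] M))
    (ht12 : ∀ a b c : M, t12 (a ⊗ₜ[ℂ] (b ⊗ₜ[ℂ] c)) = b ⊗ₜ[ℂ] (a ⊗ₜ[ℂ] c)) :
    (LinearMap.lTensor M (Coalgebra.comul (R := ℂ)) ∘ₗ nubar =
      (TensorProduct.assoc ℂ M M M).toLinearMap ∘ₗ
        LinearMap.rTensor M nubar ∘ₗ
        (TensorProduct.assoc ℂ M M M).symm.toLinearMap ∘ₗ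
        LinearMap.lTensor M (Coalgebra.comul (R := ℂ))) ∧
    ((TensorProduct.assoc ℂ M M M).toLinearMap ∘ₗ
        LinearMap.rTensor M (Coalgebra.comul (R := ℂ)) ∘ₗ nubar =
      LinearMap.lTensor M nubar ∘ₗ t12 ∘ₗ
        LinearMap.lTensor M (Coalgebra.comul (R := ℂ))) := by
  obtain rfl : nubar = comulPairing ν := eq_comulPairing hG hnubar
  obtain rfl : t12 = (TensorProduct.leftComm ℂ M M M).toLinearMap :=
    TensorProduct.ext_threefold' fun a b c => ht12 a b c
  exact ⟨lTensor_comul_comp_comulPairing ν, assoc_comp_rTensor_comul_comp_comulPairing ν⟩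

/-- For a symmetric `ν̄` the two coalgebra compatibility identities
`(id ⊗ Δ) ∘ ν̄ = (ν̄ ⊗ id) ∘ (id ⊗ Δ)` and `(Δ ⊗ id) ∘ ν̄ = (id ⊗ ν̄) ∘ τ₁₂ ∘ (id ⊗ Δ)`
hold (with the evident associators inserted). -/
theorem stmt15 {M : Type*} [AddCommGroup M] [Module ℂ M] [Coalgebra ℂ M]
    (ν : M →ₗ[ℂ] M →ₗ[ℂ] ℂ)
    (G : M ⊗[ℂ] ((M ⊗[ℂ] M) ⊗[ℂ] M) →ₗ[ℂ] M ⊗[ℂ] M)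
    (hG : ∀ a b1 b2 b3 : M,
      G (a ⊗ₜ[ℂ] ((b1 ⊗ₜ[ℂ] b2) ⊗ₜ[ℂ] b3)) = ν a b2 • (b1 ⊗ₜ[ℂ] b3))
    (nubar : M ⊗[ℂ] M →ₗ[ℂ] M ⊗[ℂ] M)
    (hnubar : ∀ α β : M, nubar (α ⊗ₜ[ℂ] β) =
      G (α ⊗ₜ[ℂ] (LinearMap.rTensor M (Coalgebra.comul (R := ℂ))
        (Coalgebra.comul (R := ℂ) β))))
    (hsym : ∀ α β : M, nubar (α ⊗ₜ[ℂ] β) = nubar (β ⊗ₜ[ℂ] α))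
    (t12 : M ⊗[ℂ] (M ⊗[ℂ] M) →ₗ[ℂ] M ⊗[ℂ] (M ⊗[ℂ] M))
    (ht12 : ∀ a b c : M, t12 (a ⊗ₜ[ℂ] (b ⊗ₜ[ℂ] c)) = b ⊗ₜ[ℂ] (a ⊗ₜ[ℂ] c)) :
    (LinearMap.lTensor M (Coalgebra.comul (R := ℂ)) ∘ₗ nubar =
      (TensorProduct.assoc ℂ M M M).toLinearMap ∘ₗ
        LinearMap.rTensor M nubar ∘ₗ
        (TensorProduct.assoc ℂ M M M).symm.toLinearMap ∘ₗ
        LinearMap.lTensor M (Coalgebra.comul (R := ℂ))) ∧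
    ((TensorProduct.assoc ℂ M M M).toLinearMap ∘ₗ
        LinearMap.rTensor M (Coalgebra.comul (R := ℂ)) ∘ₗ nubar =
      LinearMap.lTensor M nubar ∘ₗ t12 ∘ₗ
        LinearMap.lTensor M (Coalgebra.comul (R := ℂ))) :=
  stmt15_general ν G hG nubar hnubar t12 ht12
end

section
/- Assume in addition that db is a modified double Poisson bracket on A (i.e. {a,{b,c}} − {b,{a,c}} = {{a,b},c} for all a,b,c ∈ A and {a,b} + {b,a} ∈ [A,A] for all a,b ∈ A, where {a,b} = μ(db(a ⊗ b)) and [A,A] is the ℂ-linear span of commutators). Then for all a,b,c ∈ A and all α ∈ M, the restriction of P to trace elements satisfies the Jacobi identity for a left Loday bracket: P(a_τ, P(b_τ, c_α)) − P(b_τ, P(a_τ, c_α)) = P(P(a_τ, b_τ), c_α). -/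
/-!
On trace elements the bracket `P` is the image of the associated bracket `{-,-}` of `db`:
`P(x_τ, y_β) = {x, y}_β`. Indeed `ν(τ, -) = ε` contracts the middle leg of
`(Δ ⊗ id) Δ β` by the counit, leaving `Δ β`, and multiplicativity of `ρ` recombines
`s_{β¹} t_{β²}` into `(st)_β`. The Loday–Jacobi identity for `P` is then the image
under `ρ(-)_α` of the Jacobi identity of `{-,-}`.
-/

open TensorProduct

section CounitContraction

variable {R A M B : Type*} [CommSemiring R] [Semiring A] [Algebra R A]
  [AddCommMonoid M] [Module R M] [Coalgebra R M] [Semiring B] [Algebra R B]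
  (ρ : A →ₗ[R] M →ₗ[R] B) (κ : (A ⊗[R] A) ⊗[R] ((M ⊗[R] M) ⊗[R] M) →ₗ[R] B)

theorem apply_tmul_tmul_of_counit_smul
    (hκ : ∀ (s t : A) (b₁ b₂ b₃ : M),
      κ ((s ⊗ₜ t) ⊗ₜ ((b₁ ⊗ₜ b₂) ⊗ₜ b₃)) = Coalgebra.counit (R := R) b₂ • (ρ s b₁ * ρ t b₃))
    (s t : A) (v : M ⊗[R] M) (b₃ : M) :
    κ ((s ⊗ₜ t) ⊗ₜ (v ⊗ₜ b₃)) =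
      ρ s (TensorProduct.rid R M (Coalgebra.counit.lTensor M v)) * ρ t b₃ := by
  induction v using TensorProduct.induction_on with
  | zero => simp
  | tmul b₁ b₂ => simp [hκ]
  | add v w hv hw => simp only [add_tmul, tmul_add, map_add, hv, hw, add_mul]

theorem apply_tmul_rTensor_comul_of_counit_smul
    (hκ : ∀ (s t : A) (b₁ b₂ b₃ : M),
      κ ((s ⊗ₜ t) ⊗ₜ ((b₁ ⊗ₜ b₂) ⊗ₜ b₃)) = Coalgebra.counit (R := R) b₂ • (ρ s b₁ * ρ t b₃))
    (s t : A) (w : M ⊗[R] M) :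
    κ ((s ⊗ₜ t) ⊗ₜ Coalgebra.comul.rTensor M w) = LinearMap.mul' R B (map (ρ s) (ρ t) w) := by
  induction w using TensorProduct.induction_on with
  | zero => simp
  | tmul b₁ b₃ =>
    rw [LinearMap.rTensor_tmul, apply_tmul_tmul_of_counit_smul ρ κ hκ,
      Coalgebra.lTensor_counit_comul]
    simp
  | add v w hv hw => simp only [map_add, tmul_add, hv, hw]

theorem apply_tmul_comul_comul_of_counit_smul
    (hκ : ∀ (s t : A) (b₁ b₂ b₃ : M),
      κ ((s ⊗ₜ t) ⊗ₜ ((b₁ ⊗ₜ b₂) ⊗ₜ b₃)) = Coalgebra.counit (R := R) b₂ • (ρ s b₁ * ρ t b₃))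
    (hρ : ∀ (x y : A) (α : M),
      ρ (x * y) α = LinearMap.mul' R B (map (ρ x) (ρ y) (Coalgebra.comul (R := R) α)))
    (u : A ⊗[R] A) (β : M) :
    κ (u ⊗ₜ Coalgebra.comul.rTensor M (Coalgebra.comul (R := R) β)) =
      ρ (LinearMap.mul' R A u) β := by
  induction u using TensorProduct.induction_on with
  | zero => simp
  | tmul s t => rw [apply_tmul_rTensor_comul_of_counit_smul ρ κ hκ, LinearMap.mul'_apply, hρ]
  | add u v hu hv => simp only [add_tmul, map_add, hu, hv, LinearMap.add_apply]

end CounitContraction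

theorem stmt17_general {A M B : Type*} [Ring A] [Algebra ℂ A]
    [AddCommGroup M] [Module ℂ M] [Coalgebra ℂ M]
    [CommRing B] [Algebra ℂ B]
    (db : A ⊗[ℂ] A →ₗ[ℂ] A ⊗[ℂ] A)
    (ν : M →ₗ[ℂ] M →ₗ[ℂ] ℂ) (τ : M)
    (hτ : ∀ β : M, ν τ β = Coalgebra.counit (R := ℂ) β)
    (ρ : A →ₗ[ℂ] M →ₗ[ℂ] B)
    (hρmul : ∀ (x y : A) (α : M), ρ (x * y) α =
      LinearMap.mul' ℂ B (TensorProduct.map (ρ x) (ρ y) (Coalgebra.comul (R := ℂ) α)))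
    (K : M → ((A ⊗[ℂ] A) ⊗[ℂ] ((M ⊗[ℂ] M) ⊗[ℂ] M) →ₗ[ℂ] B))
    (hK : ∀ (α : M) (s t : A) (b1 b2 b3 : M),
      K α ((s ⊗ₜ[ℂ] t) ⊗ₜ[ℂ] ((b1 ⊗ₜ[ℂ] b2) ⊗ₜ[ℂ] b3)) = ν α b2 • (ρ s b1 * ρ t b3))
    (P : B →ₗ[ℂ] B →ₗ[ℂ] B)
    (hP : ∀ (a b : A) (α β : M),
      P (ρ a α) (ρ b β) =
        K α (db (a ⊗ₜ[ℂ] b) ⊗ₜ[ℂ]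
          LinearMap.rTensor M (Coalgebra.comul (R := ℂ)) (Coalgebra.comul (R := ℂ) β)))
    (hJac : ∀ a b c : A,
      LinearMap.mul' ℂ A (db (a ⊗ₜ[ℂ] LinearMap.mul' ℂ A (db (b ⊗ₜ[ℂ] c)))) -
      LinearMap.mul' ℂ A (db (b ⊗ₜ[ℂ] LinearMap.mul' ℂ A (db (a ⊗ₜ[ℂ] c)))) =
      LinearMap.mul' ℂ A (db (LinearMap.mul' ℂ A (db (a ⊗ₜ[ℂ] b)) ⊗ₜ[ℂ] c))) :
    ∀ (a b c : A) (α : M),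
      P (ρ a τ) (P (ρ b τ) (ρ c α)) - P (ρ b τ) (P (ρ a τ) (ρ c α)) =
        P (P (ρ a τ) (ρ b τ)) (ρ c α) := by
  have hKτ : ∀ (s t : A) (b₁ b₂ b₃ : M),
      K τ ((s ⊗ₜ t) ⊗ₜ ((b₁ ⊗ₜ b₂) ⊗ₜ b₃)) = Coalgebra.counit (R := ℂ) b₂ • (ρ s b₁ * ρ t b₃) :=
    fun s t b₁ b₂ b₃ => by rw [hK, hτ]
  have hP_trace : ∀ (x y : A) (β : M),
      P (ρ x τ) (ρ y β) = ρ (LinearMap.mul' ℂ A (db (x ⊗ₜ y))) β := fun x y β => by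
    rw [hP, apply_tmul_comul_comul_of_counit_smul ρ (K τ) hKτ hρmul]
  intro a b c α
  rw [hP_trace b c, hP_trace a, hP_trace a c, hP_trace b, hP_trace a b, hP_trace,
    ← hJac a b c, map_sub, LinearMap.sub_apply]

/-- If `db` is moreover a modified double Poisson bracket, then the
bracket `P` on the representation algebra restricted to trace elements satisfies
the Jacobi identity for a left Loday bracket. -/
theorem stmt17 {A M B : Type*} [Ring A] [Algebra ℂ A]
    [AddCommGroup M] [Module ℂ M] [Coalgebra ℂ M]
    [CommRing B] [Algebra ℂ B]
    (db : A ⊗[ℂ] A →ₗ[ℂ] A ⊗[ℂ] A)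
    (hLeibR : ∀ a b c : A, db (a ⊗ₜ[ℂ] (b * c)) =
      (b ⊗ₜ[ℂ] (1 : A)) * db (a ⊗ₜ[ℂ] c) + db (a ⊗ₜ[ℂ] b) * ((1 : A) ⊗ₜ[ℂ] c))
    (hLeibL : ∀ a b c : A, db ((a * b) ⊗ₜ[ℂ] c) =
      ((1 : A) ⊗ₜ[ℂ] a) * db (b ⊗ₜ[ℂ] c) + db (a ⊗ₜ[ℂ] c) * (b ⊗ₜ[ℂ] (1 : A)))
    (ν : M →ₗ[ℂ] M →ₗ[ℂ] ℂ) (τ : M)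
    (hτ : ∀ β : M, ν τ β = Coalgebra.counit (R := ℂ) β)
    (ρ : A →ₗ[ℂ] M →ₗ[ℂ] B)
    (hρmul : ∀ (x y : A) (α : M), ρ (x * y) α =
      LinearMap.mul' ℂ B (TensorProduct.map (ρ x) (ρ y) (Coalgebra.comul (R := ℂ) α)))
    (K : M → ((A ⊗[ℂ] A) ⊗[ℂ] ((M ⊗[ℂ] M) ⊗[ℂ] M) →ₗ[ℂ] B))
    (hK : ∀ (α : M) (s t : A) (b1 b2 b3 : M),
      K α ((s ⊗ₜ[ℂ] t) ⊗ₜ[ℂ] ((b1 ⊗ₜ[ℂ] b2) ⊗ₜ[ℂ] b3)) = ν α b2 • (ρ s b1 * ρ t b3))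
    (P : B →ₗ[ℂ] B →ₗ[ℂ] B)
    (hP : ∀ (a b : A) (α β : M),
      P (ρ a α) (ρ b β) =
        K α (db (a ⊗ₜ[ℂ] b) ⊗ₜ[ℂ]
          LinearMap.rTensor M (Coalgebra.comul (R := ℂ)) (Coalgebra.comul (R := ℂ) β)))
    (hJac : ∀ a b c : A,
      LinearMap.mul' ℂ A (db (a ⊗ₜ[ℂ] LinearMap.mul' ℂ A (db (b ⊗ₜ[ℂ] c)))) -
      LinearMap.mul' ℂ A (db (b ⊗ₜ[ℂ] LinearMap.mul' ℂ A (db (a ⊗ₜ[ℂ] c)))) =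
      LinearMap.mul' ℂ A (db (LinearMap.mul' ℂ A (db (a ⊗ₜ[ℂ] b)) ⊗ₜ[ℂ] c)))
    (hSkew : ∀ a b : A,
      LinearMap.mul' ℂ A (db (a ⊗ₜ[ℂ] b)) + LinearMap.mul' ℂ A (db (b ⊗ₜ[ℂ] a)) ∈
      Submodule.span ℂ {z : A | ∃ x y : A, z = x * y - y * x}) :
    ∀ (a b c : A) (α : M),
      P (ρ a τ) (P (ρ b τ) (ρ c α)) - P (ρ b τ) (P (ρ a τ) (ρ c α)) =
        P (P (ρ a τ) (ρ b τ)) (ρ c α) :=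
  stmt17_general db ν τ hτ ρ hρmul K hK P hP hJac
end

section
/- Let db be a double bracket on A and define D₁ := R₁₂ ∘ R₂₃ − R₂₃ ∘ R₁₃ − R₁₃ ∘ R₁₂ : A⊗A⊗A → A⊗A⊗A. Then for all a₁, a₂, b, c ∈ A: D₁((a₁a₂) ⊗ b ⊗ c) − (1 ⊗ a₁ ⊗ 1)·D₁(a₂ ⊗ b ⊗ c) − D₁(a₁ ⊗ b ⊗ c)·(a₂ ⊗ 1 ⊗ 1) = −Ψ₁(db(a₂ ⊗ c) ⊗ db(b ⊗ a₁)) − Ψ₂(db(a₂ ⊗ c) ⊗ db(a₁ ⊗ b)), where Ψ₁, Ψ₂ : (A⊗A)⊗(A⊗A) → A⊗A⊗A are the linear maps Ψ₁((s⊗t)⊗(x⊗y)) = s ⊗ x ⊗ (y·t) and Ψ₂((s⊗t)⊗(x⊗y)) = s ⊗ y ⊗ (x·t), and products in A⊗A⊗A are factorwise. (In Sweedler notation, the right-hand side is −db(a₂,c)′ ⊗ db(b,a₁)′ ⊗ db(b,a₁)″db(a₂,c)″ − db(a₂,c)′ ⊗ db(a₁,b)″ ⊗ db(a₁,b)′db(a₂,c)″.)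 -/
/-!
The left-hand side is the defect of `D₁` from being a derivation in the first tensor slot, and
this defect is additive in the map. For `R₁₂ ∘ R₂₃` it vanishes: `R₂₃` does not touch the first
slot, where `R₁₂` obeys the left Leibniz rule. For `R₂₃ ∘ R₁₃` and `R₁₃ ∘ R₁₂` the left Leibniz
rule splits `db(a₁a₂ ⊗ -)` into two terms, and each passes through the outer `R` as expected
except one: in `R₂₃ ∘ R₁₃` the factor `a₁` lands next to `b` and the right Leibniz rule for
`db(b ⊗ a₁ -)` produces the `Ψ₁` term; in `R₁₃ ∘ R₁₂` the factor `a₂` lands next to `c` and the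
left Leibniz rule for `db(- a₂ ⊗ c)` produces the `Ψ₂` term. Outer factors are moved through
`J₂₃` and `J₁₃` because these permutations of the tensor factors are multiplicative.
-/

open TensorProduct Algebra.TensorProduct

theorem TensorProduct.map_mul_of_map_tmul_mul_tmul {R A B C D : Type*} [CommSemiring R]
    [Semiring A] [Algebra R A] [Semiring B] [Algebra R B] [Semiring C] [Algebra R C]
    [Semiring D] [Algebra R D] (f : (A ⊗[R] B) ⊗[R] C →ₗ[R] D)
    (hf : ∀ (a a' : A) (b b' : B) (c c' : C), f (((a * a') ⊗ₜ (b * b')) ⊗ₜ (c * c')) =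
      f ((a ⊗ₜ b) ⊗ₜ c) * f ((a' ⊗ₜ b') ⊗ₜ c')) (u v : (A ⊗[R] B) ⊗[R] C) :
    f (u * v) = f u * f v := by
  have : (LinearMap.mul R _).compr₂ f = (LinearMap.mul R D).compl₁₂ f f :=
    ext_threefold fun a b c => ext_threefold fun a' b' c' => by
      simpa [tmul_mul_tmul] using hf a a' b b' c c'
  exact LinearMap.congr_fun₂ this u v

namespace DoubleBracket

section Semiring

variable {R A : Type*} [CommSemiring R] [Semiring A] [Algebra R A]
  {db : A ⊗[R] A →ₗ[R] A ⊗[R] A}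
  {J23 J13 R12 R23 R13 : (A ⊗[R] A) ⊗[R] A →ₗ[R] (A ⊗[R] A) ⊗[R] A}
  {Ψ₁ Ψ₂ : (A ⊗[R] A) ⊗[R] (A ⊗[R] A) →ₗ[R] (A ⊗[R] A) ⊗[R] A}

theorem J23_map_mul (hJ23 : ∀ x y a : A, J23 ((x ⊗ₜ y) ⊗ₜ a) = (a ⊗ₜ x) ⊗ₜ y)
    (u v : (A ⊗[R] A) ⊗[R] A) : J23 (u * v) = J23 u * J23 v :=
  map_mul_of_map_tmul_mul_tmul J23 (by simp [hJ23]) u v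

theorem J13_map_mul (hJ13 : ∀ x y b : A, J13 ((x ⊗ₜ y) ⊗ₜ b) = (x ⊗ₜ b) ⊗ₜ y)
    (u v : (A ⊗[R] A) ⊗[R] A) : J13 (u * v) = J13 u * J13 v :=
  map_mul_of_map_tmul_mul_tmul J13 (by simp [hJ13]) u v

theorem J23_mul_one_tmul_tmul (hJ23 : ∀ x y a : A, J23 ((x ⊗ₜ y) ⊗ₜ a) = (a ⊗ₜ x) ⊗ₜ y)
    (hΨ₁ : ∀ s t x y : A, Ψ₁ ((s ⊗ₜ t) ⊗ₜ (x ⊗ₜ y)) = (s ⊗ₜ x) ⊗ₜ (y * t))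
    (v : A ⊗[R] A) (p q : A) : J23 ((v * (1 ⊗ₜ q)) ⊗ₜ p) = Ψ₁ ((p ⊗ₜ q) ⊗ₜ v) := by
  induction v using TensorProduct.induction_on with
  | zero => simp
  | tmul x y => simp [hJ23, hΨ₁]
  | add u v hu hv => simp [add_mul, add_tmul, tmul_add, hu, hv]

theorem J13_one_tmul_mul_tmul (hJ13 : ∀ x y b : A, J13 ((x ⊗ₜ y) ⊗ₜ b) = (x ⊗ₜ b) ⊗ₜ y)
    (hΨ₂ : ∀ s t x y : A, Ψ₂ ((s ⊗ₜ t) ⊗ₜ (x ⊗ₜ y)) = (s ⊗ₜ y) ⊗ₜ (x * t))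
    (v : A ⊗[R] A) (x y : A) : J13 (((1 ⊗ₜ x) * v) ⊗ₜ y) = Ψ₂ (v ⊗ₜ (x ⊗ₜ y)) := by
  induction v using TensorProduct.induction_on with
  | zero => simp
  | tmul p q => simp [hJ13, hΨ₂]
  | add u v hu hv => simp [mul_add, add_tmul, hu, hv]

theorem R12_J23_tmul_mul
    (hLeibL : ∀ a b c : A, db ((a * b) ⊗ₜ c) = (1 ⊗ₜ a) * db (b ⊗ₜ c) + db (a ⊗ₜ c) * (b ⊗ₜ 1))
    (hJ23 : ∀ x y a : A, J23 ((x ⊗ₜ y) ⊗ₜ a) = (a ⊗ₜ x) ⊗ₜ y)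
    (hR12 : ∀ a b c : A, R12 ((a ⊗ₜ b) ⊗ₜ c) = db (a ⊗ₜ b) ⊗ₜ c) (w : A ⊗[R] A) (a a' : A) :
    R12 (J23 (w ⊗ₜ (a * a'))) = ((1 ⊗ₜ a) ⊗ₜ 1) * R12 (J23 (w ⊗ₜ a')) +
      R12 (J23 (w ⊗ₜ a)) * ((a' ⊗ₜ 1) ⊗ₜ 1) := by
  induction w using TensorProduct.induction_on with
  | zero => simp
  | tmul x y => simp [hJ23, hR12, hLeibL, add_tmul]
  | add u v hu hv => simp only [add_tmul, map_add, mul_add, add_mul, hu, hv]; abel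

theorem R23_J13_one_tmul_mul
    (hLeibR : ∀ a b c : A, db (a ⊗ₜ (b * c)) = (b ⊗ₜ 1) * db (a ⊗ₜ c) + db (a ⊗ₜ b) * (1 ⊗ₜ c))
    (hJ23 : ∀ x y a : A, J23 ((x ⊗ₜ y) ⊗ₜ a) = (a ⊗ₜ x) ⊗ₜ y)
    (hJ13 : ∀ x y b : A, J13 ((x ⊗ₜ y) ⊗ₜ b) = (x ⊗ₜ b) ⊗ₜ y)
    (hR23 : ∀ a b c : A, R23 ((a ⊗ₜ b) ⊗ₜ c) = J23 (db (b ⊗ₜ c) ⊗ₜ a))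
    (hΨ₁ : ∀ s t x y : A, Ψ₁ ((s ⊗ₜ t) ⊗ₜ (x ⊗ₜ y)) = (s ⊗ₜ x) ⊗ₜ (y * t))
    (m : A ⊗[R] A) (a b : A) :
    R23 (J13 (((1 ⊗ₜ a) * m) ⊗ₜ b)) =
      ((1 ⊗ₜ a) ⊗ₜ 1) * R23 (J13 (m ⊗ₜ b)) + Ψ₁ (m ⊗ₜ db (b ⊗ₜ a)) := by
  induction m using TensorProduct.induction_on with
  | zero => simp
  | tmul p q =>
    rw [tmul_mul_tmul, one_mul, hJ13, hJ13, hR23, hR23, hLeibR, add_tmul, map_add,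
      J23_mul_one_tmul_tmul hJ23 hΨ₁, ← hJ23 a 1 1, ← J23_map_mul hJ23, tmul_mul_tmul, one_mul]
  | add u v hu hv => simp only [mul_add, add_tmul, map_add, hu, hv]; abel

theorem R23_J13_mul_tmul_one
    (hJ23 : ∀ x y a : A, J23 ((x ⊗ₜ y) ⊗ₜ a) = (a ⊗ₜ x) ⊗ₜ y)
    (hJ13 : ∀ x y b : A, J13 ((x ⊗ₜ y) ⊗ₜ b) = (x ⊗ₜ b) ⊗ₜ y)
    (hR23 : ∀ a b c : A, R23 ((a ⊗ₜ b) ⊗ₜ c) = J23 (db (b ⊗ₜ c) ⊗ₜ a))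
    (m : A ⊗[R] A) (a b : A) :
    R23 (J13 ((m * (a ⊗ₜ 1)) ⊗ₜ b)) = R23 (J13 (m ⊗ₜ b)) * ((a ⊗ₜ 1) ⊗ₜ 1) := by
  induction m using TensorProduct.induction_on with
  | zero => simp
  | tmul p q =>
    rw [tmul_mul_tmul, mul_one, hJ13, hJ13, hR23, hR23, ← hJ23 1 1 a, ← J23_map_mul hJ23,
      tmul_mul_tmul, ← one_def, mul_one]
  | add u v hu hv => simp only [add_mul, add_tmul, map_add, hu, hv]

theorem R13_one_tmul_mul
    (hJ13 : ∀ x y b : A, J13 ((x ⊗ₜ y) ⊗ₜ b) = (x ⊗ₜ b) ⊗ₜ y)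
    (hR13 : ∀ a b c : A, R13 ((a ⊗ₜ b) ⊗ₜ c) = J13 (db (a ⊗ₜ c) ⊗ₜ b))
    (m : A ⊗[R] A) (a c : A) :
    R13 (((1 ⊗ₜ a) * m) ⊗ₜ c) = ((1 ⊗ₜ a) ⊗ₜ 1) * R13 (m ⊗ₜ c) := by
  induction m using TensorProduct.induction_on with
  | zero => simp
  | tmul s t =>
    rw [tmul_mul_tmul, one_mul, hR13, hR13, ← hJ13 1 1 a, ← J13_map_mul hJ13, tmul_mul_tmul,
      ← one_def, one_mul]
  | add u v hu hv => simp only [mul_add, add_tmul, map_add, hu, hv]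

theorem R13_mul_tmul_one
    (hLeibL : ∀ a b c : A, db ((a * b) ⊗ₜ c) = (1 ⊗ₜ a) * db (b ⊗ₜ c) + db (a ⊗ₜ c) * (b ⊗ₜ 1))
    (hJ13 : ∀ x y b : A, J13 ((x ⊗ₜ y) ⊗ₜ b) = (x ⊗ₜ b) ⊗ₜ y)
    (hR13 : ∀ a b c : A, R13 ((a ⊗ₜ b) ⊗ₜ c) = J13 (db (a ⊗ₜ c) ⊗ₜ b))
    (hΨ₂ : ∀ s t x y : A, Ψ₂ ((s ⊗ₜ t) ⊗ₜ (x ⊗ₜ y)) = (s ⊗ₜ y) ⊗ₜ (x * t))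
    (m : A ⊗[R] A) (a c : A) :
    R13 ((m * (a ⊗ₜ 1)) ⊗ₜ c) = R13 (m ⊗ₜ c) * ((a ⊗ₜ 1) ⊗ₜ 1) + Ψ₂ (db (a ⊗ₜ c) ⊗ₜ m) := by
  induction m using TensorProduct.induction_on with
  | zero => simp
  | tmul x y =>
    rw [tmul_mul_tmul, mul_one, hR13, hR13, hLeibL, add_tmul, map_add,
      J13_one_tmul_mul_tmul hJ13 hΨ₂, ← hJ13 a 1 1, ← J13_map_mul hJ13, tmul_mul_tmul, mul_one,
      add_comm]
  | add u v hu hv => simp only [add_mul, add_tmul, map_add, tmul_add, hu, hv]; abel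

end Semiring

section Ring

variable {R A : Type*} [CommSemiring R] [Ring A] [Algebra R A]
  {db : A ⊗[R] A →ₗ[R] A ⊗[R] A}
  {J23 J13 R12 R23 R13 : (A ⊗[R] A) ⊗[R] A →ₗ[R] (A ⊗[R] A) ⊗[R] A}
  {Ψ₁ Ψ₂ : (A ⊗[R] A) ⊗[R] (A ⊗[R] A) →ₗ[R] (A ⊗[R] A) ⊗[R] A}

def firstSlotDefect (T : (A ⊗[R] A) ⊗[R] A →ₗ[R] (A ⊗[R] A) ⊗[R] A) (a₁ a₂ b c : A) :
    (A ⊗[R] A) ⊗[R] A :=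
  T (((a₁ * a₂) ⊗ₜ b) ⊗ₜ c) - ((1 ⊗ₜ a₁) ⊗ₜ 1) * T ((a₂ ⊗ₜ b) ⊗ₜ c) -
    T ((a₁ ⊗ₜ b) ⊗ₜ c) * ((a₂ ⊗ₜ 1) ⊗ₜ 1)

theorem firstSlotDefect_sub (T S : (A ⊗[R] A) ⊗[R] A →ₗ[R] (A ⊗[R] A) ⊗[R] A) (a₁ a₂ b c : A) :
    firstSlotDefect (T - S) a₁ a₂ b c =
      firstSlotDefect T a₁ a₂ b c - firstSlotDefect S a₁ a₂ b c := by
  simp only [firstSlotDefect, LinearMap.sub_apply, mul_sub, sub_mul]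
  abel

theorem firstSlotDefect_R12_comp_R23
    (hLeibL : ∀ a b c : A, db ((a * b) ⊗ₜ c) = (1 ⊗ₜ a) * db (b ⊗ₜ c) + db (a ⊗ₜ c) * (b ⊗ₜ 1))
    (hJ23 : ∀ x y a : A, J23 ((x ⊗ₜ y) ⊗ₜ a) = (a ⊗ₜ x) ⊗ₜ y)
    (hR12 : ∀ a b c : A, R12 ((a ⊗ₜ b) ⊗ₜ c) = db (a ⊗ₜ b) ⊗ₜ c)
    (hR23 : ∀ a b c : A, R23 ((a ⊗ₜ b) ⊗ₜ c) = J23 (db (b ⊗ₜ c) ⊗ₜ a)) (a₁ a₂ b c : A) :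
    firstSlotDefect (R12 ∘ₗ R23) a₁ a₂ b c = 0 := by
  simp only [firstSlotDefect, LinearMap.comp_apply, hR23, R12_J23_tmul_mul hLeibL hJ23 hR12]
  abel

theorem firstSlotDefect_R23_comp_R13
    (hLeibR : ∀ a b c : A, db (a ⊗ₜ (b * c)) = (b ⊗ₜ 1) * db (a ⊗ₜ c) + db (a ⊗ₜ b) * (1 ⊗ₜ c))
    (hLeibL : ∀ a b c : A, db ((a * b) ⊗ₜ c) = (1 ⊗ₜ a) * db (b ⊗ₜ c) + db (a ⊗ₜ c) * (b ⊗ₜ 1))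
    (hJ23 : ∀ x y a : A, J23 ((x ⊗ₜ y) ⊗ₜ a) = (a ⊗ₜ x) ⊗ₜ y)
    (hJ13 : ∀ x y b : A, J13 ((x ⊗ₜ y) ⊗ₜ b) = (x ⊗ₜ b) ⊗ₜ y)
    (hR23 : ∀ a b c : A, R23 ((a ⊗ₜ b) ⊗ₜ c) = J23 (db (b ⊗ₜ c) ⊗ₜ a))
    (hR13 : ∀ a b c : A, R13 ((a ⊗ₜ b) ⊗ₜ c) = J13 (db (a ⊗ₜ c) ⊗ₜ b))
    (hΨ₁ : ∀ s t x y : A, Ψ₁ ((s ⊗ₜ t) ⊗ₜ (x ⊗ₜ y)) = (s ⊗ₜ x) ⊗ₜ (y * t)) (a₁ a₂ b c : A) :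
    firstSlotDefect (R23 ∘ₗ R13) a₁ a₂ b c = Ψ₁ (db (a₂ ⊗ₜ c) ⊗ₜ db (b ⊗ₜ a₁)) := by
  simp only [firstSlotDefect, LinearMap.comp_apply, hR13, hLeibL, add_tmul, map_add,
    R23_J13_one_tmul_mul hLeibR hJ23 hJ13 hR23 hΨ₁, R23_J13_mul_tmul_one hJ23 hJ13 hR23]
  abel

theorem firstSlotDefect_R13_comp_R12
    (hLeibL : ∀ a b c : A, db ((a * b) ⊗ₜ c) = (1 ⊗ₜ a) * db (b ⊗ₜ c) + db (a ⊗ₜ c) * (b ⊗ₜ 1))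
    (hJ13 : ∀ x y b : A, J13 ((x ⊗ₜ y) ⊗ₜ b) = (x ⊗ₜ b) ⊗ₜ y)
    (hR12 : ∀ a b c : A, R12 ((a ⊗ₜ b) ⊗ₜ c) = db (a ⊗ₜ b) ⊗ₜ c)
    (hR13 : ∀ a b c : A, R13 ((a ⊗ₜ b) ⊗ₜ c) = J13 (db (a ⊗ₜ c) ⊗ₜ b))
    (hΨ₂ : ∀ s t x y : A, Ψ₂ ((s ⊗ₜ t) ⊗ₜ (x ⊗ₜ y)) = (s ⊗ₜ y) ⊗ₜ (x * t)) (a₁ a₂ b c : A) :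
    firstSlotDefect (R13 ∘ₗ R12) a₁ a₂ b c = Ψ₂ (db (a₂ ⊗ₜ c) ⊗ₜ db (a₁ ⊗ₜ b)) := by
  simp only [firstSlotDefect, LinearMap.comp_apply, hR12, hLeibL, add_tmul, map_add,
    R13_one_tmul_mul hJ13 hR13, R13_mul_tmul_one hLeibL hJ13 hR13 hΨ₂]
  abel

end Ring

end DoubleBracket

open DoubleBracket

/-- The defect of `D₁ = R₁₂R₂₃ − R₂₃R₁₃ − R₁₃R₁₂` being a derivation
in its first argument is given by the explicit formula of equation (25). -/
theorem stmt18 {A : Type*} [Ring A] [Algebra ℂ A]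
    (db : A ⊗[ℂ] A →ₗ[ℂ] A ⊗[ℂ] A)
    (hLeibR : ∀ a b c : A, db (a ⊗ₜ[ℂ] (b * c)) =
      (b ⊗ₜ[ℂ] (1 : A)) * db (a ⊗ₜ[ℂ] c) + db (a ⊗ₜ[ℂ] b) * ((1 : A) ⊗ₜ[ℂ] c))
    (hLeibL : ∀ a b c : A, db ((a * b) ⊗ₜ[ℂ] c) =
      ((1 : A) ⊗ₜ[ℂ] a) * db (b ⊗ₜ[ℂ] c) + db (a ⊗ₜ[ℂ] c) * (b ⊗ₜ[ℂ] (1 : A)))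
    (J23 J13 : (A ⊗[ℂ] A) ⊗[ℂ] A →ₗ[ℂ] (A ⊗[ℂ] A) ⊗[ℂ] A)
    (hJ23 : ∀ x y a : A, J23 ((x ⊗ₜ[ℂ] y) ⊗ₜ[ℂ] a) = (a ⊗ₜ[ℂ] x) ⊗ₜ[ℂ] y)
    (hJ13 : ∀ x y b : A, J13 ((x ⊗ₜ[ℂ] y) ⊗ₜ[ℂ] b) = (x ⊗ₜ[ℂ] b) ⊗ₜ[ℂ] y)
    (R12 R23 R13 : (A ⊗[ℂ] A) ⊗[ℂ] A →ₗ[ℂ] (A ⊗[ℂ] A) ⊗[ℂ] A)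
    (hR12 : ∀ a b c : A, R12 ((a ⊗ₜ[ℂ] b) ⊗ₜ[ℂ] c) = db (a ⊗ₜ[ℂ] b) ⊗ₜ[ℂ] c)
    (hR23 : ∀ a b c : A, R23 ((a ⊗ₜ[ℂ] b) ⊗ₜ[ℂ] c) = J23 (db (b ⊗ₜ[ℂ] c) ⊗ₜ[ℂ] a))
    (hR13 : ∀ a b c : A, R13 ((a ⊗ₜ[ℂ] b) ⊗ₜ[ℂ] c) = J13 (db (a ⊗ₜ[ℂ] c) ⊗ₜ[ℂ] b))
    (D1 : (A ⊗[ℂ] A) ⊗[ℂ] A →ₗ[ℂ] (A ⊗[ℂ] A) ⊗[ℂ] A)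
    (hD1 : D1 = R12 ∘ₗ R23 - R23 ∘ₗ R13 - R13 ∘ₗ R12)
    (Ψ₁ Ψ₂ : (A ⊗[ℂ] A) ⊗[ℂ] (A ⊗[ℂ] A) →ₗ[ℂ] (A ⊗[ℂ] A) ⊗[ℂ] A)
    (hΨ₁ : ∀ s t x y : A,
      Ψ₁ ((s ⊗ₜ[ℂ] t) ⊗ₜ[ℂ] (x ⊗ₜ[ℂ] y)) = (s ⊗ₜ[ℂ] x) ⊗ₜ[ℂ] (y * t))
    (hΨ₂ : ∀ s t x y : A,
      Ψ₂ ((s ⊗ₜ[ℂ] t) ⊗ₜ[ℂ] (x ⊗ₜ[ℂ] y)) = (s ⊗ₜ[ℂ] y) ⊗ₜ[ℂ] (x * t)) :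
    ∀ a1 a2 b c : A,
      D1 (((a1 * a2) ⊗ₜ[ℂ] b) ⊗ₜ[ℂ] c)
        - (((1 : A) ⊗ₜ[ℂ] a1) ⊗ₜ[ℂ] (1 : A)) * D1 ((a2 ⊗ₜ[ℂ] b) ⊗ₜ[ℂ] c)
        - D1 ((a1 ⊗ₜ[ℂ] b) ⊗ₜ[ℂ] c) * ((a2 ⊗ₜ[ℂ] (1 : A)) ⊗ₜ[ℂ] (1 : A)) =
      - Ψ₁ (db (a2 ⊗ₜ[ℂ] c) ⊗ₜ[ℂ] db (b ⊗ₜ[ℂ] a1))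
        - Ψ₂ (db (a2 ⊗ₜ[ℂ] c) ⊗ₜ[ℂ] db (a1 ⊗ₜ[ℂ] b)) := by
  intro a1 a2 b c
  change firstSlotDefect D1 a1 a2 b c = _
  rw [hD1, firstSlotDefect_sub, firstSlotDefect_sub,
    firstSlotDefect_R12_comp_R23 hLeibL hJ23 hR12 hR23,
    firstSlotDefect_R23_comp_R13 hLeibR hLeibL hJ23 hJ13 hR23 hR13 hΨ₁,
    firstSlotDefect_R13_comp_R12 hLeibL hJ13 hR12 hR13 hΨ₂, zero_sub]
end
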